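/- arXiv:2602.06750 — 7 statements merged into one kernel-verified Lean document; each statement's English description precedes it below -/
import Mathlib

section
/- Let f : ℝⁿ → ℝ ∪ {+∞} be proper, lower semicontinuous, and ρ-weakly convex for some ρ ≥ 0, and assume that the domain of f has nonempty interior. Fix x ∈ ℝⁿ and 0 < λ < 1/ρ, and set μ := 1/λ − ρ > 0. Then for every δ > 0, the second moment satisfies ∫_{ℝⁿ} ‖y − prox_{λf}(x)‖² dσ_δ(y) ≤ nδ/μ. -/
open MeasureTheory Real

/-- `expWeight δ a` is `exp(-a/δ)` for an extended-real `a`, with the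
convention `exp(-(+∞)) = 0`. -/
noncomputable def expWeight (δ : ℝ) (a : EReal) : ℝ :=
  if a = ⊤ then 0 else Real.exp (-a.toReal / δ)

private lemma aux_exp_neg_le {t : ℝ} (ht : 0 ≤ t) :
    Real.exp (-t) ≤ 1 - t + t ^ 2 / 2 := by
  have h1 : 1 + t + t ^ 2 / 2 ≤ Real.exp t := Real.quadratic_le_exp_of_nonneg ht
  have h2 : Real.exp (-t) * (1 + t + t ^ 2 / 2) ≤ 1 := by
    calc Real.exp (-t) * (1 + t + t ^ 2 / 2) ≤ Real.exp (-t) * Real.exp t :=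
          mul_le_mul_of_nonneg_left h1 (Real.exp_pos _).le
      _ = 1 := by rw [← Real.exp_add]; simp
  nlinarith [Real.exp_pos (-t), sq_nonneg t, sq_nonneg (t^2)]

private lemma aux_one_sub_pow {x : ℝ} (hx0 : 0 ≤ x) (hx1 : x ≤ 1) (n : ℕ) :
    1 - x ^ n ≤ n * (1 - x) := by
  induction n with
  | zero => simp
  | succ n ih =>
      have hxn : x ^ n ≤ 1 := pow_le_one₀ hx0 hx1
      have hxn0 : 0 ≤ x ^ n := pow_nonneg hx0 n
      have : 1 - x ^ (n+1) = (1 - x ^ n) + x ^ n * (1 - x) := by ring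
      rw [this]
      push_cast
      nlinarith

private lemma aux_integrable_gauss (n : ℕ) {a : ℝ} (ha : 0 < a) :
    Integrable (fun y : EuclideanSpace ℝ (Fin n) => Real.exp (-a * ‖y‖ ^ 2)) := by
  have h := (GaussianFourier.integrable_cexp_neg_mul_sq_norm_add
      (V := EuclideanSpace ℝ (Fin n)) (b := (a : ℂ)) (by simpa using ha) 0 0).norm
  refine h.congr ?_
  filter_upwards with y
  rw [Complex.norm_exp]
  norm_num
  left
  rw [← Complex.ofReal_pow, Complex.ofReal_re]

private lemma aux_pow_div_le_exp {s : ℝ} (hs : 0 ≤ s) (k : ℕ) :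
    s ^ k / k.factorial ≤ Real.exp s := by
  refine le_trans ?_ (Real.sum_le_exp_of_nonneg hs (k+1))
  refine Finset.single_le_sum (f := fun i => s ^ i / (Nat.factorial i)) ?_ ?_
  · intro i _; positivity
  · simp

private lemma aux_integrable_gauss_moment (n : ℕ) {a : ℝ} (ha : 0 < a) (k : ℕ) :
    Integrable (fun y : EuclideanSpace ℝ (Fin n) => ‖y‖ ^ k * Real.exp (-a * ‖y‖ ^ 2)) := by
  have hhalf : (0:ℝ) < a / 2 := by linarith
  set C : ℝ := 1 + k.factorial * (2 / a) ^ k with hC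
  have hCpos : (0:ℝ) < C := by positivity
  refine Integrable.mono' ((aux_integrable_gauss n hhalf).const_mul C) ?_ ?_
  · exact ((measurable_norm.pow_const k).mul
      ((measurable_norm.pow_const 2).const_mul (-a)).exp).aestronglyMeasurable
  · filter_upwards with y
    set t : ℝ := ‖y‖ with ht
    have ht0 : 0 ≤ t := norm_nonneg y
    have h1 : t ^ k ≤ 1 + (t ^ 2) ^ k := by
      rcases le_total t 1 with h | h
      · have : t ^ k ≤ 1 := pow_le_one₀ ht0 h
        nlinarith [pow_nonneg (pow_nonneg ht0 2) k]
      · have h2 : t ^ k ≤ (t ^ 2) ^ k := by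
          rw [← pow_mul]
          exact pow_le_pow_right₀ h (by omega)
        nlinarith
    have h2 : (t ^ 2) ^ k ≤ k.factorial * (2 / a) ^ k * Real.exp (a / 2 * t ^ 2) := by
      have := aux_pow_div_le_exp (s := a / 2 * t ^ 2) (by positivity) k
      have hfac : (0:ℝ) < (k.factorial : ℝ) := by positivity
      rw [div_le_iff₀ hfac] at this
      calc (t ^ 2) ^ k = (2 / a) ^ k * (a / 2 * t ^ 2) ^ k := by
            rw [mul_pow, ← mul_pow]
            field_simp
            rw [← mul_pow, show 2 / a * (t ^ 2 * a / 2) = t ^ 2 by field_simp]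
        _ ≤ (2 / a) ^ k * (Real.exp (a / 2 * t ^ 2) * k.factorial) := by
            refine mul_le_mul_of_nonneg_left this (by positivity)
        _ = k.factorial * (2 / a) ^ k * Real.exp (a / 2 * t ^ 2) := by ring
    have hexp : Real.exp (-a * t ^ 2) = Real.exp (-(a/2) * t ^ 2) * Real.exp (-(a/2) * t ^2) := by
      rw [← Real.exp_add]; ring_nf
    have hle1 : Real.exp (-(a/2) * t ^ 2) ≤ 1 := by
      apply Real.exp_le_one_iff.mpr; nlinarith
    rw [Real.norm_eq_abs, abs_of_nonneg (by positivity)]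
    calc t ^ k * Real.exp (-a * t ^ 2)
        ≤ (1 + (t^2)^k) * Real.exp (-a * t ^ 2) := by
          exact mul_le_mul_of_nonneg_right h1 (Real.exp_pos _).le
      _ ≤ C * Real.exp (-(a/2) * t ^ 2) := by
          rw [hexp, hC]
          have hek : Real.exp (a / 2 * t^2) * Real.exp (-(a/2)*t^2) = 1 := by
            rw [← Real.exp_add]; ring_nf; exact Real.exp_zero
          have e1 : (0:ℝ) < Real.exp (-(a/2) * t^2) := Real.exp_pos _
          have p1 : (t^2)^k * Real.exp (-(a/2)*t^2) ≤ k.factorial * (2/a)^k := by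
            have := mul_le_mul_of_nonneg_right h2 e1.le
            calc (t^2)^k * Real.exp (-(a/2)*t^2)
                ≤ ↑k.factorial * (2 / a) ^ k * Real.exp (a/2*t^2) * Real.exp (-(a/2)*t^2) := this
              _ = ↑k.factorial * (2 / a) ^ k * (Real.exp (a/2*t^2) * Real.exp (-(a/2)*t^2)) := by
                  ring
              _ = ↑k.factorial * (2 / a) ^ k := by rw [hek]; ring
          nlinarith [p1, hle1, e1, pow_nonneg (pow_nonneg ht0 2) k,
            mul_le_mul_of_nonneg_right p1 e1.le]
      _ = C * Real.exp (-(a/2) * ‖y‖ ^ 2) := by rw [ht]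
  

private lemma aux_sq_identity {n : ℕ} (u v : EuclideanSpace ℝ (Fin n)) {a b : ℝ}
    (hab : a + b = 1) :
    a * ‖u‖ ^ 2 + b * ‖v‖ ^ 2 - ‖a • u + b • v‖ ^ 2 = a * b * ‖u - v‖ ^ 2 := by
  have hb : b = 1 - a := by linarith
  subst hb
  have h1 : ‖a • u + (1-a) • v‖ ^ 2
      = a^2 * ‖u‖^2 + 2 * (a * ((1-a) * (inner ℝ u v : ℝ))) + (1-a)^2 * ‖v‖^2 := by
    rw [norm_add_sq_real, real_inner_smul_left, real_inner_smul_right, norm_smul, norm_smul]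
    rw [Real.norm_eq_abs, Real.norm_eq_abs, mul_pow, mul_pow, sq_abs, sq_abs]
  have h2 : ‖u - v‖^2 = ‖u‖^2 - 2 * (inner ℝ u v : ℝ) + ‖v‖^2 := norm_sub_sq_real u v
  linear_combination -h1 - (a*(1-a)) * h2

set_option maxHeartbeats 2000000 in
/-- Second-moment (mean-square localization) bound for the
probability measure `σ_δ` with density proportional to `e^{-g/δ}`:
`∫ ‖y - prox_{λ f}(x)‖² dσ_δ(y) ≤ nδ/μ`, expressed as a ratio of integrals. -/
theorem stmt1
    (n : ℕ) (f : EuclideanSpace ℝ (Fin n) → EReal)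
    (hbot : ∀ y, f y ≠ ⊥)
    (hproper : ∃ y, f y ≠ ⊤)
    (hlsc : LowerSemicontinuous f)
    (ρ : ℝ) (hρ : 0 ≤ ρ)
    (hwconv : ∀ (y z : EuclideanSpace ℝ (Fin n)) (a b : ℝ), 0 ≤ a → 0 ≤ b → a + b = 1 →
      f (a • y + b • z) + ((ρ / 2 * ‖a • y + b • z‖ ^ 2 : ℝ) : EReal)
        ≤ (a : EReal) * (f y + ((ρ / 2 * ‖y‖ ^ 2 : ℝ) : EReal))
          + (b : EReal) * (f z + ((ρ / 2 * ‖z‖ ^ 2 : ℝ) : EReal)))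
    (hdom : (interior {y | f y ≠ ⊤}).Nonempty)
    (x : EuclideanSpace ℝ (Fin n))
    (lam : ℝ) (hlam : 0 < lam) (hlamρ : lam * ρ < 1)
    (μ : ℝ) (hμ : μ = 1 / lam - ρ)
    (g : EuclideanSpace ℝ (Fin n) → EReal)
    (hg : ∀ y, g y = f y + ((‖x - y‖ ^ 2 / (2 * lam) : ℝ) : EReal))
    (xstar : EuclideanSpace ℝ (Fin n)) (hxstar : ∀ y, g xstar ≤ g y)
    (δ : ℝ) (hδ : 0 < δ) :
    (∫ y, expWeight δ (g y) * ‖y - xstar‖ ^ 2) / (∫ y, expWeight δ (g y))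
      ≤ n * δ / μ := by
  have hμpos : 0 < μ := by
    rw [hμ, sub_pos, lt_div_iff₀ hlam]
    linarith [hlamρ, mul_comm lam ρ]
  -- basic EReal facts
  have hgbot : ∀ y, g y ≠ ⊥ := by
    intro y
    rw [hg y, Ne, EReal.add_eq_bot_iff]
    push_neg
    exact ⟨hbot y, EReal.coe_ne_bot _⟩
  have hgtop : ∀ y, (g y = ⊤ ↔ f y = ⊤) := by
    intro y
    rw [hg y]
    constructor
    · intro h
      by_contra hf
      exact ((EReal.add_lt_top hf (EReal.coe_ne_top _)).ne) h
    · intro h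
      rw [h, EReal.top_add_coe]
  have hfxs : f xstar ≠ ⊤ := by
    obtain ⟨y0, hy0⟩ := hproper
    intro h
    have : g y0 = ⊤ := top_le_iff.mp (((hgtop xstar).mpr h) ▸ hxstar y0)
    exact hy0 ((hgtop y0).mp this)
  -- real versions
  set gr : EuclideanSpace ℝ (Fin n) → ℝ := fun y => (g y).toReal with hgr_def
  have hgcoe : ∀ y, f y ≠ ⊤ → g y = ((gr y : ℝ) : EReal) := by
    intro y hy
    rw [hgr_def]
    exact (EReal.coe_toReal (fun h => hy ((hgtop y).mp h)) (hgbot y)).symm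
  have hgr_eq : ∀ y, f y ≠ ⊤ → gr y = (f y).toReal + ‖x - y‖ ^ 2 / (2 * lam) := by
    intro y hy
    rw [hgr_def]
    simp only
    rw [hg y, EReal.toReal_add hy (hbot y) (EReal.coe_ne_top _) (EReal.coe_ne_bot _),
      EReal.toReal_coe]
  -- the key strong-convexity inequality, real form
  have key : ∀ (u v : EuclideanSpace ℝ (Fin n)) (a b : ℝ), 0 < a → 0 < b → a + b = 1 →
      f u ≠ ⊤ → f v ≠ ⊤ →
      f (a • u + b • v) ≠ ⊤ ∧
      gr (a • u + b • v) ≤ a * gr u + b * gr v - μ / 2 * a * b * ‖u - v‖ ^ 2 := by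
    intro u v a b ha hb hab hu hv
    have hcv := hwconv u v a b ha.le hb.le hab
    rw [← EReal.coe_toReal hu (hbot u), ← EReal.coe_toReal hv (hbot v)] at hcv
    set fru := (f u).toReal
    set frv := (f v).toReal
    have hR : ((a : EReal) * ((fru : EReal) + ((ρ / 2 * ‖u‖ ^ 2 : ℝ) : EReal))
        + (b : EReal) * ((frv : EReal) + ((ρ / 2 * ‖v‖ ^ 2 : ℝ) : EReal)))
        = (((a * (fru + ρ / 2 * ‖u‖ ^ 2) + b * (frv + ρ / 2 * ‖v‖ ^ 2) : ℝ)) : EReal) := by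
      push_cast
      ring
    rw [hR] at hcv
    set w := a • u + b • v with hw
    have hwtop : f w ≠ ⊤ := by
      intro h
      rw [h, EReal.top_add_coe] at hcv
      exact not_le_of_gt (EReal.coe_lt_top _) hcv
    refine ⟨hwtop, ?_⟩
    rw [← EReal.coe_toReal hwtop (hbot w), ← EReal.coe_add] at hcv
    have hreal : (f w).toReal + ρ / 2 * ‖w‖ ^ 2
        ≤ a * (fru + ρ / 2 * ‖u‖ ^ 2) + b * (frv + ρ / 2 * ‖v‖ ^ 2) :=
      EReal.coe_le_coe_iff.mp hcv
    -- now pure real computation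
    have id1 : a * ‖u‖ ^ 2 + b * ‖v‖ ^ 2 - ‖w‖ ^ 2 = a * b * ‖u - v‖ ^ 2 :=
      aux_sq_identity u v hab
    have id2 : a * ‖x - u‖ ^ 2 + b * ‖x - v‖ ^ 2 - ‖x - w‖ ^ 2
        = a * b * ‖u - v‖ ^ 2 := by
      have hx : x - w = a • (x - u) + b • (x - v) := by
        rw [hw]
        rw [smul_sub, smul_sub, ← add_sub_assoc]
        rw [sub_add_eq_add_sub, sub_sub]
        congr 1
        · have : a • x + b • x = (a + b) • x := (add_smul a b x).symm
          rw [this, hab, one_smul]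
      have huv : (x - u) - (x - v) = v - u := by abel
      have := aux_sq_identity (x - u) (x - v) hab
      rw [← hx, huv, norm_sub_rev v u] at this
      exact this
    rw [hgr_eq w hwtop, hgr_eq u hu, hgr_eq v hv]
    have hlam2 : (0:ℝ) < 2 * lam := by linarith
    have hμlam : μ / 2 = 1 / (2 * lam) - ρ / 2 := by
      rw [hμ]; field_simp
    have expand : a * ‖x - u‖ ^ 2 / (2*lam) + b * ‖x - v‖ ^ 2 / (2*lam) - ‖x - w‖ ^2 / (2*lam)
        = a * b * ‖u - v‖ ^ 2 / (2 * lam) := by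
      rw [← add_div, ← sub_div]
      rw [show a * ‖x - u‖ ^ 2 + b * ‖x - v‖ ^ 2 - ‖x - w‖ ^ 2 = a * b * ‖u - v‖ ^2 from id2]
    have : (f w).toReal ≤ a * fru + b * frv + ρ/2 * (a * b * ‖u - v‖ ^ 2) := by
      nlinarith [hreal, id1]
    rw [hμlam]
    have expand2 : a * (‖x - u‖ ^ 2 / (2*lam)) + b * (‖x - v‖ ^ 2 / (2*lam))
        = ‖x - w‖ ^2 / (2*lam) + 1/(2*lam) * (a * b * ‖u - v‖ ^ 2) := by
      field_simp at expand ⊢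
      linarith [expand]
    linarith [this, expand2]

  -- monotonicity of gr at the minimizer
  have grxs_le : ∀ y, f y ≠ ⊤ → gr xstar ≤ gr y := by
    intro y hy
    exact EReal.toReal_le_toReal (hxstar y) (hgbot xstar) (fun h => hy ((hgtop y).mp h))
  -- Fact 1 : quadratic growth away from the minimizer
  have fact1 : ∀ y, f y ≠ ⊤ → gr xstar + μ / 2 * ‖y - xstar‖ ^ 2 ≤ gr y := by
    intro y hy
    have hstep : ∀ a : ℝ, 0 < a → a < 1 →
        gr xstar + μ / 2 * (1 - a) * ‖y - xstar‖ ^ 2 ≤ gr y := by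
      intro a ha0 ha1
      have hb0 : (0:ℝ) < 1 - a := by linarith
      obtain ⟨hwt, hineq⟩ := key y xstar a (1-a) ha0 hb0 (by ring) hy hfxs
      have h0 := grxs_le _ hwt
      have hle := le_trans h0 hineq
      have h2 : a * (gr xstar + μ/2 * (1-a) * ‖y - xstar‖^2) ≤ a * gr y := by nlinarith
      exact (mul_le_mul_iff_right₀ ha0).mp h2
    refine le_of_forall_pos_le_add ?_
    intro ε hε
    set S := ‖y - xstar‖ ^ 2 with hS
    have hS0 : 0 ≤ S := by positivity
    have hd0 : (0:ℝ) < μ/2 * S + 1 := by positivity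
    set a : ℝ := min (1/2) (ε / (μ/2 * S + 1)) with ha
    have ha0 : 0 < a := by
      apply lt_min (by norm_num)
      positivity
    have ha1 : a < 1 := lt_of_le_of_lt (min_le_left _ _) (by norm_num)
    have h := hstep a ha0 ha1
    have haux : μ/2 * a * S ≤ ε := by
      have h1 : a ≤ ε / (μ/2*S+1) := min_le_right _ _
      have h2 : μ/2 * S * a ≤ μ/2 * S * (ε / (μ/2*S+1)) := by
        apply mul_le_mul_of_nonneg_left h1 (by positivity)
      have h3 : μ/2 * S * (ε / (μ/2*S+1)) ≤ ε := by
        rw [mul_comm, div_mul_eq_mul_div, div_le_iff₀ hd0]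
        nlinarith
      linarith [h2, h3]
    linarith [h]
  -- Fact 2 : scaling lower bound
  have fact2 : ∀ (y : EuclideanSpace ℝ (Fin n)) (c : ℝ), 1 < c → f (xstar + c • y) ≠ ⊤ →
      f (xstar + y) ≠ ⊤ ∧
      gr (xstar + y) + μ/2 * (c^2 - 1) * ‖y‖^2 ≤ gr (xstar + c • y) := by
    intro y c hc hftop
    have hc0 : (0:ℝ) < c := by linarith
    have hcne : c ≠ 0 := ne_of_gt hc0
    have ha0 : (0:ℝ) < 1/c := by positivity
    have hb0 : (0:ℝ) < 1 - 1/c := by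
      have : 1/c < 1 := by
        rw [div_lt_one hc0]; exact hc
      linarith
    have hcomb : (1/c) • (xstar + c • y) + (1 - 1/c) • xstar = xstar + y := by
      match_scalars <;> field_simp <;> ring
    obtain ⟨h1, h2⟩ := key (xstar + c • y) xstar (1/c) (1 - 1/c) ha0 hb0 (by ring) hftop hfxs
    rw [hcomb] at h1 h2
    refine ⟨h1, ?_⟩
    have hnorm : ‖(xstar + c • y) - xstar‖^2 = c^2 * ‖y‖^2 := by
      rw [add_sub_cancel_left, norm_smul, Real.norm_eq_abs, mul_pow, sq_abs]
    rw [hnorm] at h2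
    have hf1 := fact1 (xstar + y) h1
    have hys : ‖(xstar + y) - xstar‖^2 = ‖y‖^2 := by rw [add_sub_cancel_left]
    rw [hys] at hf1
    have h2' : c * gr (xstar + y) ≤ gr (xstar + c • y) + (c-1) * gr xstar
        - μ/2 * (c-1) * c * ‖y‖^2 := by
      have hmul := mul_le_mul_of_nonneg_left h2 hc0.le
      have hexp : c * (1 / c * gr (xstar + c • y) + (1 - 1 / c) * gr xstar -
          μ / 2 * (1 / c) * (1 - 1 / c) * (c ^ 2 * ‖y‖ ^ 2))
          = gr (xstar + c • y) + (c-1) * gr xstar - μ/2 * (c-1) * c * ‖y‖^2 := by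
        field_simp
      linarith [hexp ▸ hmul]
    have hprod := mul_le_mul_of_nonneg_left hf1 (by linarith : (0:ℝ) ≤ c - 1)
    nlinarith [h2', hprod]

  -- the recentred weight function
  set W : EuclideanSpace ℝ (Fin n) → ℝ := fun y => expWeight δ (g (xstar + y)) with hWdef
  have hWnonneg : ∀ y, 0 ≤ W y := by
    intro y
    rw [hWdef]
    simp only [expWeight]
    split
    · exact le_refl 0
    · exact (Real.exp_pos _).le
  have hWeq : ∀ y, W y = if f (xstar + y) = ⊤ then 0
      else Real.exp (-(gr (xstar + y)) / δ) := by
    intro y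
    rw [hWdef]
    simp only [expWeight]
    by_cases h : f (xstar + y) = ⊤
    · rw [if_pos ((hgtop _).mpr h), if_pos h]
    · rw [if_neg (fun hh => h ((hgtop _).mp hh)), if_neg h]
  have hWeq2 : W = fun y => if f (xstar + y) = ⊤ then 0
      else Real.exp (-((f (xstar + y)).toReal + ‖x - (xstar + y)‖^2/(2*lam)) / δ) := by
    funext y
    rw [hWeq y]
    by_cases h : f (xstar + y) = ⊤
    · rw [if_pos h, if_pos h]
    · rw [if_neg h, if_neg h, hgr_eq _ h]
  have hfmeas : Measurable f := hlsc.measurable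
  have hcompmeas : Measurable (fun y : EuclideanSpace ℝ (Fin n) => f (xstar + y)) :=
    hfmeas.comp (measurable_const_add xstar)
  have hset : MeasurableSet {y : EuclideanSpace ℝ (Fin n) | f (xstar + y) = ⊤} :=
    hcompmeas (measurableSet_singleton ⊤)
  have hWmeas : Measurable W := by
    rw [hWeq2]
    refine Measurable.ite hset measurable_const ?_
    have m1 : Measurable (fun y : EuclideanSpace ℝ (Fin n) => (f (xstar + y)).toReal) :=
      measurable_ereal_toReal.comp hcompmeas
    have m2 : Continuous (fun y : EuclideanSpace ℝ (Fin n) => ‖x - (xstar + y)‖^2/(2*lam)) :=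
      (((continuous_const.sub (continuous_const.add continuous_id)).norm.pow 2).div_const (2*lam))
    exact Real.measurable_exp.comp (((m1.add m2.measurable).neg).div_const δ)
  -- pointwise Gaussian bounds
  set K0 : ℝ := Real.exp (-(gr xstar) / δ) with hK0
  have hK0pos : 0 < K0 := Real.exp_pos _
  have hB2 : ∀ y, W y ≤ K0 * Real.exp (-(μ/(2*δ)) * ‖y‖^2) := by
    intro y
    rw [hWeq y]
    by_cases h : f (xstar + y) = ⊤
    · rw [if_pos h]; positivity
    · rw [if_neg h]
      have hf1 := fact1 (xstar + y) h
      rw [show ‖(xstar + y) - xstar‖^2 = ‖y‖^2 from by rw [add_sub_cancel_left]] at hf1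
      rw [hK0, ← Real.exp_add]
      apply Real.exp_le_exp.mpr
      have hstep : -(gr (xstar+y)) ≤ -(gr xstar) - μ/2*‖y‖^2 := by linarith
      calc -(gr (xstar+y))/δ ≤ (-(gr xstar) - μ/2*‖y‖^2)/δ :=
            div_le_div_of_nonneg_right hstep hδ.le
        _ = -(gr xstar)/δ + (-(μ/(2*δ)) * ‖y‖^2) := by field_simp; ring
  have hB3 : ∀ c : ℝ, 1 < c → ∀ y,
      W (c • y) ≤ W y * Real.exp (-(μ*(c^2-1)/(2*δ)) * ‖y‖^2) := by
    intro c hc y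
    rw [hWeq (c • y), hWeq y]
    by_cases h : f (xstar + c • y) = ⊤
    · rw [if_pos h]; positivity
    · obtain ⟨h1, h2⟩ := fact2 y c hc h
      rw [if_neg h, if_neg h1, ← Real.exp_add]
      apply Real.exp_le_exp.mpr
      have hstep : -(gr (xstar + c • y)) ≤ -(gr (xstar+y)) - μ/2*(c^2-1)*‖y‖^2 := by
        linarith
      calc -(gr (xstar + c • y))/δ ≤ (-(gr (xstar+y)) - μ/2*(c^2-1)*‖y‖^2)/δ :=
            div_le_div_of_nonneg_right hstep hδ.le
        _ = -(gr (xstar+y))/δ + (-(μ*(c^2-1)/(2*δ)) * ‖y‖^2) := by field_simp; ring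
  -- integrability
  have hapos : (0:ℝ) < μ/(2*δ) := by positivity
  have hInt0 : Integrable W := by
    refine Integrable.mono' ((aux_integrable_gauss n hapos).const_mul K0)
      hWmeas.aestronglyMeasurable ?_
    filter_upwards with y
    rw [Real.norm_eq_abs, abs_of_nonneg (hWnonneg y)]
    exact hB2 y
  have hIntk : ∀ k : ℕ, Integrable (fun y => W y * ‖y‖^k) := by
    intro k
    refine Integrable.mono' ((aux_integrable_gauss_moment n hapos k).const_mul K0)
      (hWmeas.mul (measurable_norm.pow_const k)).aestronglyMeasurable ?_
    filter_upwards with y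
    rw [Real.norm_eq_abs, abs_of_nonneg (mul_nonneg (hWnonneg y) (by positivity))]
    calc W y * ‖y‖^k ≤ (K0 * Real.exp (-(μ/(2*δ)) * ‖y‖^2)) * ‖y‖^k :=
          mul_le_mul_of_nonneg_right (hB2 y) (by positivity)
      _ = K0 * (‖y‖^k * Real.exp (-(μ/(2*δ)) * ‖y‖^2)) := by ring
  set Z : ℝ := ∫ y, W y with hZ
  set M : ℝ := ∫ y, W y * ‖y‖^2 with hM
  set Q : ℝ := ∫ y, W y * ‖y‖^4 with hQ
  have hZ0 : 0 ≤ Z := integral_nonneg hWnonneg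
  have hM0 : 0 ≤ M := integral_nonneg (fun y => mul_nonneg (hWnonneg y) (by positivity))
  have hQ0 : 0 ≤ Q := integral_nonneg (fun y => mul_nonneg (hWnonneg y) (by positivity))
  -- the key inequality for each dilation factor c > 1
  have hmain : ∀ c : ℝ, 1 < c →
      μ/(2*δ) * M ≤ (n:ℝ)/2 * Z + (c^2-1) * (μ/(2*δ))^2 / 2 * Q := by
    intro c hc
    have hc0 : (0:ℝ) < c := by linarith
    have hc21 : (0:ℝ) < c^2 - 1 := by nlinarith
    set s : ℝ := μ * (c^2-1) / (2*δ) with hs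
    have hs0 : 0 < s := by positivity
    have hscale : ∫ y, W (c • y) = ((c:ℝ) ^ n)⁻¹ * Z := by
      rw [MeasureTheory.Measure.integral_comp_smul_of_nonneg volume W c (hR := hc0.le)]
      rw [finrank_euclideanSpace_fin, smul_eq_mul]
    have hIntc : Integrable (fun y => W (c • y)) := hInt0.comp_smul (ne_of_gt hc0)
    have hIntmid : Integrable (fun y => W y * Real.exp (-s * ‖y‖^2)) := by
      refine Integrable.mono' hInt0
        (hWmeas.mul (((measurable_norm.pow_const 2).const_mul (-s)).exp)).aestronglyMeasurable ?_
      filter_upwards with y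
      rw [Real.norm_eq_abs, abs_of_nonneg (mul_nonneg (hWnonneg y) (Real.exp_pos _).le)]
      calc W y * Real.exp (-s*‖y‖^2) ≤ W y * 1 := by
            refine mul_le_mul_of_nonneg_left ?_ (hWnonneg y)
            refine Real.exp_le_one_iff.mpr ?_
            have : (0:ℝ) ≤ s * ‖y‖^2 := by positivity
            linarith
        _ = W y := mul_one _
    have step1 : ∫ y, W (c • y) ≤ ∫ y, W y * Real.exp (-s * ‖y‖^2) := by
      refine integral_mono hIntc hIntmid ?_
      intro y
      have hb := hB3 c hc y
      calc W (c • y) ≤ W y * Real.exp (-(μ*(c^2-1)/(2*δ)) * ‖y‖^2) := hb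
        _ = W y * Real.exp (-s * ‖y‖^2) := by rw [hs]
    have i2 : Integrable (fun y => s * (W y * ‖y‖^2)) := (hIntk 2).const_mul s
    have i4 : Integrable (fun y => s^2/2 * (W y * ‖y‖^4)) := (hIntk 4).const_mul (s^2/2)
    have i24 : Integrable (fun y => W y - s * (W y * ‖y‖^2)) := hInt0.sub i2
    have hIntP : Integrable (fun y => W y - s * (W y * ‖y‖^2) + s^2/2 * (W y * ‖y‖^4)) :=
      i24.add i4
    have step2 : ∫ y, W y * Real.exp (-s * ‖y‖^2)
        ≤ ∫ y, (W y - s * (W y * ‖y‖^2) + s^2/2 * (W y * ‖y‖^4)) := by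
      refine integral_mono hIntmid hIntP ?_
      intro y
      have ht : 0 ≤ s * ‖y‖^2 := by positivity
      have hexp := aux_exp_neg_le ht
      have hh := mul_le_mul_of_nonneg_left hexp (hWnonneg y)
      calc W y * Real.exp (-s*‖y‖^2) = W y * Real.exp (-(s*‖y‖^2)) := by rw [neg_mul]
        _ ≤ W y * (1 - s*‖y‖^2 + (s*‖y‖^2)^2/2) := hh
        _ = W y - s * (W y * ‖y‖^2) + s^2/2 * (W y * ‖y‖^4) := by ring
    have hsum : ∫ y, (W y - s * (W y * ‖y‖^2) + s^2/2 * (W y * ‖y‖^4))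
        = Z - s * M + s^2/2 * Q := by
      rw [integral_add i24 i4, integral_sub hInt0 i2, integral_const_mul, integral_const_mul]
    have hchain : ((c:ℝ)⁻¹)^n * Z ≤ Z - s * M + s^2/2 * Q := by
      have := (step1.trans (step2.trans_eq hsum))
      rw [hscale] at this
      rw [inv_pow]
      exact this
    -- power bound
    have hinv0 : (0:ℝ) ≤ c⁻¹ := by positivity
    have hci : c * c⁻¹ = 1 := mul_inv_cancel₀ (ne_of_gt hc0)
    have hinv1 : c⁻¹ ≤ 1 := by nlinarith [mul_nonneg (sub_nonneg.mpr hc.le) hinv0]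
    have hp1 := aux_one_sub_pow hinv0 hinv1 n
    have key2 : 1 - c⁻¹ ≤ (c^2-1)/2 := by
      nlinarith [hci, mul_nonneg (sq_nonneg (c-1)) (by linarith : (0:ℝ) ≤ c + 2)]
    have hpow : 1 - (c⁻¹) ^ n ≤ (n:ℝ)/2 * (c^2 - 1) := by
      have hn0 : (0:ℝ) ≤ n := Nat.cast_nonneg n
      nlinarith [hp1, key2, hn0]
    have h5 : s * M ≤ (1 - (c⁻¹)^n) * Z + s^2/2 * Q := by nlinarith [hchain]
    have h6 : (1 - (c⁻¹)^n) * Z ≤ (n:ℝ)/2 * (c^2-1) * Z :=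
      mul_le_mul_of_nonneg_right hpow hZ0
    have h7 : s * M ≤ (n:ℝ)/2*(c^2-1)*Z + s^2/2*Q := by linarith
    rw [hs] at h7
    have h8 : (c^2-1) * (μ/(2*δ) * M)
        ≤ (c^2-1) * ((n:ℝ)/2*Z + (c^2-1)*(μ/(2*δ))^2/2*Q) := by
      calc (c^2-1) * (μ/(2*δ) * M) = μ*(c^2-1)/(2*δ) * M := by ring
        _ ≤ (n:ℝ)/2*(c^2-1)*Z + (μ*(c^2-1)/(2*δ))^2/2*Q := h7
        _ = (c^2-1) * ((n:ℝ)/2*Z + (c^2-1)*(μ/(2*δ))^2/2*Q) := by ring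
    have := le_of_mul_le_mul_left h8 hc21
    linarith [this]
  -- pass to the limit c → 1⁺
  have hfinal : μ/(2*δ) * M ≤ (n:ℝ)/2 * Z := by
    refine le_of_forall_pos_le_add ?_
    intro ε hε
    set X : ℝ := (μ/(2*δ))^2/2 * Q with hX
    have hX0 : 0 ≤ X := by positivity
    set e' : ℝ := min 1 (ε / (X + 1)) with he'
    have he'0 : 0 < e' := lt_min one_pos (by positivity)
    set c : ℝ := Real.sqrt (1 + e') with hc
    have hc2 : c^2 = 1 + e' := Real.sq_sqrt (by linarith)
    have hc1 : 1 < c := by nlinarith [Real.sqrt_nonneg (1+e'), hc2, he'0]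
    have h := hmain c hc1
    have hterm : (c^2-1) * (μ/(2*δ))^2/2 * Q ≤ ε := by
      have heq : (c^2-1) * (μ/(2*δ))^2/2 * Q = e' * X := by rw [hc2, hX]; ring
      rw [heq]
      have h1 : e' ≤ ε/(X+1) := min_le_right _ _
      calc e' * X ≤ (ε/(X+1)) * X := mul_le_mul_of_nonneg_right h1 hX0
        _ ≤ ε := by
            rw [div_mul_eq_mul_div, div_le_iff₀ (by positivity)]
            nlinarith
    linarith
  have hMZ : M ≤ (n:ℝ)*δ/μ * Z := by
    have hcoef : (0:ℝ) < 2*δ/μ := by positivity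
    have := mul_le_mul_of_nonneg_left hfinal hcoef.le
    have hone : (2*δ/μ) * (μ/(2*δ)) = 1 := by field_simp
    calc M = ((2*δ/μ) * (μ/(2*δ))) * M := by rw [hone, one_mul]
      _ = (2*δ/μ) * (μ/(2*δ) * M) := by ring
      _ ≤ (2*δ/μ) * ((n:ℝ)/2 * Z) := this
      _ = (n:ℝ)*δ/μ * Z := by field_simp
  -- translate the integrals back
  have htrans1 : M = ∫ y, expWeight δ (g y) * ‖y - xstar‖ ^ 2 := by
    rw [hM, ← MeasureTheory.integral_add_left_eq_self
      (μ := (volume : Measure (EuclideanSpace ℝ (Fin n))))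
      (fun y => expWeight δ (g y) * ‖y - xstar‖ ^ 2) xstar]
    refine integral_congr_ae (Filter.Eventually.of_forall fun y => ?_)
    simp only [hWdef, add_sub_cancel_left]
  have htrans2 : Z = ∫ y, expWeight δ (g y) := by
    rw [hZ, ← MeasureTheory.integral_add_left_eq_self
      (μ := (volume : Measure (EuclideanSpace ℝ (Fin n))))
      (fun y => expWeight δ (g y)) xstar]
  rw [← htrans1, ← htrans2]
  rcases eq_or_lt_of_le hZ0 with hZeq | hZpos
  · have hMeq : M = 0 := by
      have : M ≤ 0 := by
        have := hMZ
        rw [← hZeq] at this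
        simpa using this
      linarith
    rw [hMeq, ← hZeq, zero_div]
    apply div_nonneg (by positivity) hμpos.le
  · rw [div_le_iff₀ hZpos]
    exact hMZ
end

section
/- Let f : ℝⁿ → ℝ ∪ {+∞} be proper, lower semicontinuous, and ρ-weakly convex for some ρ ≥ 0, and assume that the domain of f has nonempty interior. Fix x ∈ ℝⁿ and 0 < λ < 1/ρ, and set μ := 1/λ − ρ > 0. Then for every δ > 0 and every r > 0, σ_δ({y ∈ ℝⁿ : ‖y − prox_{λf}(x)‖ ≥ r}) ≤ nδ/(μ r²). -/
open MeasureTheory Real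

open scoped RealInnerProductSpace

lemma integrable_gauss (n : ℕ) {b : ℝ} (hb : 0 < b) :
    Integrable (fun z : EuclideanSpace ℝ (Fin n) => Real.exp (-b * ‖z‖^2)) := by
  have h := GaussianFourier.integrable_cexp_neg_mul_sq_norm_add (V := EuclideanSpace ℝ (Fin n))
      (b := (b:ℂ)) (by simpa using hb) 0 0
  have h2 := h.norm
  refine h2.congr (Filter.Eventually.of_forall fun v => ?_)
  simp [Complex.norm_exp, ← Complex.ofReal_pow]

lemma measurable_expWeight (δ : ℝ) : Measurable (expWeight δ) := by
  unfold expWeight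
  apply Measurable.ite (measurableSet_singleton (⊤:EReal)) measurable_const
  exact Real.measurable_exp.comp ((measurable_ereal_toReal.neg).div_const δ)

lemma expWeight_nonneg (δ : ℝ) (a : EReal) : 0 ≤ expWeight δ a := by
  unfold expWeight
  split
  · exact le_refl 0
  · positivity

set_option maxHeartbeats 1000000 in
/-- Concentration bound: for every `r > 0`,
`σ_δ({y : ‖y - prox_{λ f}(x)‖ ≥ r}) ≤ nδ/(μ r²)`, where `σ_δ` is the
probability measure with density proportional to `e^{-g/δ}`, expressed as a
ratio of integrals. -/
theorem stmt2
    (n : ℕ) (f : EuclideanSpace ℝ (Fin n) → EReal)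
    (hbot : ∀ y, f y ≠ ⊥)
    (hproper : ∃ y, f y ≠ ⊤)
    (hlsc : LowerSemicontinuous f)
    (ρ : ℝ) (hρ : 0 ≤ ρ)
    (hwconv : ∀ (y z : EuclideanSpace ℝ (Fin n)) (a b : ℝ), 0 ≤ a → 0 ≤ b → a + b = 1 →
      f (a • y + b • z) + ((ρ / 2 * ‖a • y + b • z‖ ^ 2 : ℝ) : EReal)
        ≤ (a : EReal) * (f y + ((ρ / 2 * ‖y‖ ^ 2 : ℝ) : EReal))
          + (b : EReal) * (f z + ((ρ / 2 * ‖z‖ ^ 2 : ℝ) : EReal)))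
    (hdom : (interior {y | f y ≠ ⊤}).Nonempty)
    (x : EuclideanSpace ℝ (Fin n))
    (lam : ℝ) (hlam : 0 < lam) (hlamρ : lam * ρ < 1)
    (μ : ℝ) (hμ : μ = 1 / lam - ρ)
    (g : EuclideanSpace ℝ (Fin n) → EReal)
    (hg : ∀ y, g y = f y + ((‖x - y‖ ^ 2 / (2 * lam) : ℝ) : EReal))
    (xstar : EuclideanSpace ℝ (Fin n)) (hxstar : ∀ y, g xstar ≤ g y)
    (δ : ℝ) (hδ : 0 < δ)
    (r : ℝ) (hr : 0 < r) :
    (∫ y in {y : EuclideanSpace ℝ (Fin n) | r ≤ ‖y - xstar‖}, expWeight δ (g y)) /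
        (∫ y, expWeight δ (g y))
      ≤ n * δ / (μ * r ^ 2) := by
  have hμpos : 0 < μ := by
    have : ρ < 1 / lam := by rw [lt_div_iff₀ hlam]; linarith
    rw [hμ]; linarith
  -- basic EReal facts
  have hgbot : ∀ y, g y ≠ ⊥ := by
    intro y h
    rw [hg y] at h
    by_cases hf : f y = ⊤
    · rw [hf, EReal.top_add_coe] at h; exact absurd h (by simp)
    · obtain ⟨a, ha⟩ : ∃ a : ℝ, f y = (a : EReal) :=
        ⟨(f y).toReal, (EReal.coe_toReal hf (hbot y)).symm⟩
      rw [ha, ← EReal.coe_add] at h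
      exact EReal.coe_ne_bot _ h
  have hgtop_iff : ∀ y, g y = ⊤ ↔ f y = ⊤ := by
    intro y
    rw [hg y]
    constructor
    · intro h
      by_contra hf
      obtain ⟨a, ha⟩ : ∃ a : ℝ, f y = (a : EReal) :=
        ⟨(f y).toReal, (EReal.coe_toReal hf (hbot y)).symm⟩
      rw [ha, ← EReal.coe_add] at h
      exact EReal.coe_ne_top _ h
    · intro h; rw [h, EReal.top_add_coe]
  have hgx_ne_top : g xstar ≠ ⊤ := by
    obtain ⟨y, hy⟩ := hproper
    intro h
    have h2 : g y = ⊤ := top_le_iff.1 (h ▸ hxstar y)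
    exact hy ((hgtop_iff y).1 h2)
  have hfx_ne : f xstar ≠ ⊤ := fun h => hgx_ne_top ((hgtop_iff xstar).2 h)
  have hGval : ∀ y, f y ≠ ⊤ → (g y).toReal = (f y).toReal + ‖x - y‖^2 / (2*lam) := by
    intro y hy
    obtain ⟨a, ha⟩ : ∃ a : ℝ, f y = (a : EReal) :=
      ⟨(f y).toReal, (EReal.coe_toReal hy (hbot y)).symm⟩
    rw [hg y, ha, ← EReal.coe_add, EReal.toReal_coe, EReal.toReal_coe]
  -- Claim A : convexity of the shifted function
  have claimA : ∀ (z : EuclideanSpace ℝ (Fin n)) (s : ℝ), 0 ≤ s → s ≤ 1 →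
      f (xstar + z) ≠ ⊤ → f (xstar + s • z) ≠ ⊤ ∧
      (g (xstar + s • z)).toReal - μ/2*(s^2*‖z‖^2) ≤
        s * ((g (xstar + z)).toReal - μ/2*‖z‖^2) + (1-s) * (g xstar).toReal := by
    intro z s hs0 hs1 hz
    obtain ⟨α, hα⟩ : ∃ a : ℝ, f (xstar + z) = (a : EReal) :=
      ⟨(f (xstar + z)).toReal, (EReal.coe_toReal hz (hbot _)).symm⟩
    obtain ⟨β, hβ⟩ : ∃ a : ℝ, f xstar = (a : EReal) :=
      ⟨(f xstar).toReal, (EReal.coe_toReal hfx_ne (hbot _)).symm⟩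
    have hpt : s • (xstar + z) + (1-s) • xstar = xstar + s • z := by module
    have hw := hwconv (xstar + z) xstar s (1-s) hs0 (by linarith) (by ring)
    rw [hpt, hα, hβ] at hw
    have hcast : ((s:EReal) * ((α:EReal) + ((ρ/2*‖xstar+z‖^2 : ℝ):EReal))
        + (((1-s:ℝ)):EReal) * ((β:EReal) + ((ρ/2*‖xstar‖^2 : ℝ):EReal)))
        = (((s*(α + ρ/2*‖xstar+z‖^2) + (1-s)*(β + ρ/2*‖xstar‖^2)) : ℝ) : EReal) := by
      norm_cast
    rw [hcast] at hw
    have hwne : f (xstar + s • z) ≠ ⊤ := by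
      intro h
      rw [h, EReal.top_add_coe] at hw
      exact EReal.coe_ne_top _ (top_le_iff.1 hw)
    obtain ⟨γ, hγ⟩ : ∃ a : ℝ, f (xstar + s • z) = (a : EReal) :=
      ⟨(f (xstar + s • z)).toReal, (EReal.coe_toReal hwne (hbot _)).symm⟩
    rw [hγ, ← EReal.coe_add] at hw
    have hreal : γ + ρ/2*‖xstar + s•z‖^2
        ≤ s*(α + ρ/2*‖xstar+z‖^2) + (1-s)*(β + ρ/2*‖xstar‖^2) :=
      EReal.coe_le_coe_iff.1 hw
    refine ⟨hwne, ?_⟩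
    rw [hGval _ hwne, hGval _ hz, hGval _ hfx_ne, hα, hβ, hγ]
    simp only [EReal.toReal_coe]
    have e1 : ‖xstar + s•z‖^2 = ‖xstar‖^2 + 2*(s*⟪xstar, z⟫) + s^2*‖z‖^2 := by
      rw [norm_add_sq_real, real_inner_smul_right, norm_smul, Real.norm_eq_abs, mul_pow, sq_abs]
    have e2 : ‖x - (xstar + s•z)‖^2
        = ‖x - xstar‖^2 - 2*(s*⟪x - xstar, z⟫) + s^2*‖z‖^2 := by
      rw [sub_add_eq_sub_sub, norm_sub_sq_real, real_inner_smul_right, norm_smul,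
        Real.norm_eq_abs, mul_pow, sq_abs]
    have e3 : ‖xstar + z‖^2 = ‖xstar‖^2 + 2*⟪xstar, z⟫ + ‖z‖^2 := norm_add_sq_real _ _
    have e4 : ‖x - (xstar + z)‖^2 = ‖x - xstar‖^2 - 2*⟪x - xstar, z⟫ + ‖z‖^2 := by
      rw [sub_add_eq_sub_sub, norm_sub_sq_real]
    rw [e1, e3] at hreal
    rw [e2, e4, hμ]
    have hlam' : lam ≠ 0 := ne_of_gt hlam
    have key : (‖x - xstar‖^2 - 2*(s*⟪x - xstar, z⟫) + s^2*‖z‖^2)/(2*lam)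
          - (1/lam - ρ)/2*(s^2*‖z‖^2)
          - (ρ/2*(‖xstar‖^2 + 2*(s*⟪xstar, z⟫) + s^2*‖z‖^2))
        = s * ((‖x - xstar‖^2 - 2*⟪x - xstar, z⟫ + ‖z‖^2)/(2*lam) - (1/lam - ρ)/2*‖z‖^2
              - ρ/2*(‖xstar‖^2 + 2*⟪xstar, z⟫ + ‖z‖^2))
          + (1-s) * (‖x - xstar‖^2/(2*lam) - ρ/2*‖xstar‖^2) := by
      field_simp
      ring
    linarith [key, hreal]
  -- Claim B : strong minimality
  have claimB : ∀ z, f (xstar + z) ≠ ⊤ →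
      (g xstar).toReal + μ/2*‖z‖^2 ≤ (g (xstar + z)).toReal := by
    intro z hz
    have h1 : ∀ u : ℝ, 0 < u → u ≤ 1 →
        (g xstar).toReal ≤ ((g (xstar + z)).toReal - μ/2*‖z‖^2) + μ/2*u*‖z‖^2 := by
      intro u hu0 hu1
      obtain ⟨hne, hA⟩ := claimA z u hu0.le hu1 hz
      have hgne : g (xstar + u • z) ≠ ⊤ := fun h => hne ((hgtop_iff _).1 h)
      have hmin : (g xstar).toReal ≤ (g (xstar + u • z)).toReal :=
        EReal.toReal_le_toReal (hxstar _) (hgbot xstar) hgne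
      have h2 : u * (g xstar).toReal
          ≤ u * (((g (xstar + z)).toReal - μ/2*‖z‖^2) + μ/2*u*‖z‖^2) := by
        nlinarith [hmin, hA]
      exact le_of_mul_le_mul_left h2 hu0
    have h3 : (g xstar).toReal ≤ (g (xstar + z)).toReal - μ/2*‖z‖^2 := by
      apply le_of_forall_pos_le_add
      intro ε hε
      have hq1 : 0 < μ/2*‖z‖^2 + 1 := by positivity
      set u := min 1 (ε / (μ/2*‖z‖^2 + 1)) with hu
      have hu0 : 0 < u := lt_min one_pos (div_pos hε hq1)
      have hu1 : u ≤ 1 := min_le_left _ _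
      have h2 := h1 u hu0 hu1
      have h4 : u * (μ/2*‖z‖^2 + 1) ≤ ε := by
        calc u * (μ/2*‖z‖^2 + 1) ≤ (ε / (μ/2*‖z‖^2 + 1)) * (μ/2*‖z‖^2 + 1) :=
              mul_le_mul_of_nonneg_right (min_le_right _ _) hq1.le
          _ = ε := div_mul_cancel₀ ε hq1.ne'
      nlinarith [h2, h4, hu0]
    linarith [h3]
  -- Claim C : the key pointwise inequality
  have claimC : ∀ (z : EuclideanSpace ℝ (Fin n)) (s : ℝ), 0 ≤ s → s ≤ 1 →
      f (xstar + z) ≠ ⊤ → f (xstar + s • z) ≠ ⊤ ∧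
      (g (xstar + s • z)).toReal + μ/2*((1-s^2)*‖z‖^2) ≤ (g (xstar + z)).toReal := by
    intro z s hs0 hs1 hz
    obtain ⟨hne, hA⟩ := claimA z s hs0 hs1 hz
    have hB := claimB z hz
    exact ⟨hne, by nlinarith [hA, hB]⟩
  -- the weight function and its centered version
  set W : EuclideanSpace ℝ (Fin n) → ℝ := fun y => expWeight δ (g y) with hWdef
  have hWnonneg : ∀ y, 0 ≤ W y := fun y => expWeight_nonneg δ (g y)
  have hWval : ∀ y, f y ≠ ⊤ → W y = rexp (-(g y).toReal / δ) := by
    intro y hy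
    simp only [hWdef, expWeight]
    rw [if_neg (fun h => hy ((hgtop_iff y).1 h))]
  have hWzero : ∀ y, f y = ⊤ → W y = 0 := by
    intro y hy; simp only [hWdef, expWeight]; rw [if_pos ((hgtop_iff y).2 hy)]
  have hfmeas : Measurable f := hlsc.measurable
  have hW_eq : W = fun y => expWeight δ (f y) * rexp (-(‖x - y‖^2/(2*lam))/δ) := by
    funext y
    by_cases hy : f y = ⊤
    · rw [hWzero y hy]; simp [expWeight, hy]
    · rw [hWval y hy, hGval y hy]
      have h1 : expWeight δ (f y) = rexp (-(f y).toReal/δ) := by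
        simp only [expWeight]; rw [if_neg hy]
      rw [h1, ← Real.exp_add]
      congr 1
      ring
  have hWmeas : Measurable W := by
    rw [hW_eq]
    have hcont2 : Continuous fun y : EuclideanSpace ℝ (Fin n) =>
        rexp (-(‖x - y‖^2/(2*lam))/δ) :=
      Real.continuous_exp.comp
        ((((continuous_const.sub continuous_id).norm.pow 2).div_const (2*lam)).neg.div_const δ)
    exact ((measurable_expWeight δ).comp hfmeas).mul hcont2.measurable
  set V : EuclideanSpace ℝ (Fin n) → ℝ := fun z => W (xstar + z) with hVdef
  have hVmeas : Measurable V := hWmeas.comp (measurable_const_add xstar)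
  have hVnonneg : ∀ z, 0 ≤ V z := fun z => hWnonneg _
  set C : ℝ := rexp (-(g xstar).toReal / δ) with hCdef
  have hVle : ∀ z, V z ≤ C * rexp (-(μ/(2*δ)) * ‖z‖^2) := by
    intro z
    by_cases hz : f (xstar + z) = ⊤
    · simp only [hVdef]
      rw [hWzero _ hz]
      positivity
    · simp only [hVdef]
      rw [hWval _ hz]
      have hB := claimB z hz
      have h1 : -(g (xstar+z)).toReal / δ ≤ -(g xstar).toReal/δ + (-(μ/(2*δ)) * ‖z‖^2) := by
        have h5 : -(g xstar).toReal/δ + (-(μ/(2*δ)) * ‖z‖^2)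
            = -((g xstar).toReal + μ/2*‖z‖^2)/δ := by
          field_simp
          ring
        rw [h5]
        have h6 : -(g (xstar+z)).toReal ≤ -((g xstar).toReal + μ/2*‖z‖^2) := by linarith
        exact div_le_div_of_nonneg_right h6 hδ.le
      calc rexp (-(g (xstar+z)).toReal/δ)
          ≤ rexp (-(g xstar).toReal/δ + (-(μ/(2*δ)) * ‖z‖^2)) := Real.exp_le_exp.2 h1
        _ = C * rexp (-(μ/(2*δ)) * ‖z‖^2) := Real.exp_add _ _
  have hb : 0 < μ/(2*δ) := by positivity
  have hVint : Integrable V := by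
    refine Integrable.mono' ((integrable_gauss n hb).const_mul C) hVmeas.aestronglyMeasurable
      (Filter.Eventually.of_forall fun z => ?_)
    rw [Real.norm_of_nonneg (hVnonneg z)]
    exact hVle z
  have hVsqint : Integrable (fun z : EuclideanSpace ℝ (Fin n) => V z * ‖z‖^2) := by
    have hb2 : 0 < μ/(4*δ) := by positivity
    refine Integrable.mono' ((integrable_gauss n hb2).const_mul (C * (4*δ/μ)))
      (hVmeas.mul (measurable_norm.pow_const 2)).aestronglyMeasurable
      (Filter.Eventually.of_forall fun z => ?_)
    rw [Real.norm_of_nonneg (mul_nonneg (hVnonneg z) (by positivity))]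
    have h1 : V z * ‖z‖^2 ≤ C * rexp (-(μ/(2*δ)) * ‖z‖^2) * ‖z‖^2 :=
      mul_le_mul_of_nonneg_right (hVle z) (by positivity)
    have h2 : ‖z‖^2 ≤ (4*δ/μ) * rexp ((μ/(4*δ)) * ‖z‖^2) := by
      have h3 : (μ/(4*δ)) * ‖z‖^2 ≤ rexp ((μ/(4*δ)) * ‖z‖^2) := by
        linarith [Real.add_one_le_exp ((μ/(4*δ)) * ‖z‖^2)]
      have hc1 : (4*δ/μ) * (μ/(4*δ)) = 1 := by
        field_simp
      calc ‖z‖^2 = (4*δ/μ) * ((μ/(4*δ)) * ‖z‖^2) := by rw [← mul_assoc, hc1, one_mul]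
        _ ≤ (4*δ/μ) * rexp ((μ/(4*δ)) * ‖z‖^2) :=
            mul_le_mul_of_nonneg_left h3 (by positivity)
    have h4 : C * rexp (-(μ/(2*δ)) * ‖z‖^2) * ((4*δ/μ) * rexp ((μ/(4*δ)) * ‖z‖^2))
        = C * (4*δ/μ) * rexp (-(μ/(4*δ)) * ‖z‖^2) := by
      have hexp : rexp (-(μ/(2*δ)) * ‖z‖^2) * rexp ((μ/(4*δ)) * ‖z‖^2)
          = rexp (-(μ/(4*δ)) * ‖z‖^2) := by
        rw [← Real.exp_add]
        congr 1
        field_simp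
        ring
      calc C * rexp (-(μ/(2*δ)) * ‖z‖^2) * ((4*δ/μ) * rexp ((μ/(4*δ)) * ‖z‖^2))
          = C * (4*δ/μ) * (rexp (-(μ/(2*δ)) * ‖z‖^2) * rexp ((μ/(4*δ)) * ‖z‖^2)) := by ring
        _ = C * (4*δ/μ) * rexp (-(μ/(4*δ)) * ‖z‖^2) := by rw [hexp]
    calc V z * ‖z‖^2 ≤ C * rexp (-(μ/(2*δ)) * ‖z‖^2) * ‖z‖^2 := h1
      _ ≤ C * rexp (-(μ/(2*δ)) * ‖z‖^2) * ((4*δ/μ) * rexp ((μ/(4*δ)) * ‖z‖^2)) :=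
          mul_le_mul_of_nonneg_left h2 (by positivity)
      _ = C * (4*δ/μ) * rexp (-(μ/(4*δ)) * ‖z‖^2) := h4
  -- key pointwise inequality at the weight level
  have hP : ∀ (s : ℝ), 0 ≤ s → s ≤ 1 → ∀ z,
      V z + (μ*(1-s^2)/(2*δ)) * (V z * ‖z‖^2) ≤ V (s • z) := by
    intro s hs0 hs1 z
    have hs2 : 0 ≤ 1 - s^2 := by nlinarith
    have hc : 0 ≤ μ*(1-s^2)/(2*δ) := by positivity
    by_cases hz : f (xstar + z) = ⊤
    · have hz0 : V z = 0 := by simp only [hVdef]; exact hWzero _ hz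
      rw [hz0]
      simpa using hVnonneg (s • z)
    · obtain ⟨hne, hC⟩ := claimC z s hs0 hs1 hz
      have e1 : V z = rexp (-(g (xstar+z)).toReal/δ) := by
        simp only [hVdef]; exact hWval _ hz
      have e2 : V (s • z) = rexp (-(g (xstar + s • z)).toReal/δ) := by
        simp only [hVdef]; exact hWval _ hne
      rw [e1, e2]
      have step1 : rexp (-(g (xstar+z)).toReal/δ)
            + (μ*(1-s^2)/(2*δ)) * (rexp (-(g (xstar+z)).toReal/δ) * ‖z‖^2)
          ≤ rexp (-(g (xstar+z)).toReal/δ) * rexp ((μ*(1-s^2)/(2*δ))*‖z‖^2) := by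
        have h6 : 1 + (μ*(1-s^2)/(2*δ))*‖z‖^2 ≤ rexp ((μ*(1-s^2)/(2*δ))*‖z‖^2) := by
          linarith [Real.add_one_le_exp ((μ*(1-s^2)/(2*δ))*‖z‖^2)]
        have h7 : 0 < rexp (-(g (xstar+z)).toReal/δ) := Real.exp_pos _
        nlinarith [h6, h7, mul_nonneg hc (sq_nonneg ‖z‖)]
      have step2 : rexp (-(g (xstar+z)).toReal/δ) * rexp ((μ*(1-s^2)/(2*δ))*‖z‖^2)
          ≤ rexp (-(g (xstar + s • z)).toReal/δ) := by
        rw [← Real.exp_add]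
        apply Real.exp_le_exp.2
        rw [← sub_nonneg]
        have h8 : (-(g (xstar + s • z)).toReal/δ
              - (-(g (xstar+z)).toReal/δ + (μ*(1-s^2)/(2*δ))*‖z‖^2))
            = ((g (xstar+z)).toReal - (g (xstar + s • z)).toReal - μ/2*((1-s^2)*‖z‖^2))/δ := by
          field_simp
          ring
        rw [h8]
        apply div_nonneg _ hδ.le
        linarith [hC]
      linarith [step1, step2]
  -- integrate the pointwise inequality and rescale
  set D : ℝ := ∫ z, V z with hDdef
  set M : ℝ := ∫ z, V z * ‖z‖^2 with hMdef
  have hD0 : 0 ≤ D := integral_nonneg hVnonneg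
  have hM0 : 0 ≤ M := integral_nonneg (fun z => mul_nonneg (hVnonneg z) (by positivity))
  have hstep : ∀ s : ℝ, 0 < s → s < 1 →
      D + (μ*(1-s^2)/(2*δ)) * M ≤ ((s^n)⁻¹) * D := by
    intro s hs0 hs1
    have hs2 : 0 ≤ 1 - s^2 := by nlinarith
    have hc : 0 ≤ μ*(1-s^2)/(2*δ) := by positivity
    have hRint : Integrable (fun z => V (s • z)) := hVint.comp_smul hs0.ne'
    have hmono : ∫ z, (V z + (μ*(1-s^2)/(2*δ)) * (V z * ‖z‖^2)) ≤ ∫ z, V (s • z) :=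
      integral_mono_of_nonneg
        (Filter.Eventually.of_forall fun z =>
          add_nonneg (hVnonneg z) (mul_nonneg hc (mul_nonneg (hVnonneg z) (by positivity))))
        hRint (Filter.Eventually.of_forall (hP s hs0.le hs1.le))
    rw [integral_add hVint (hVsqint.const_mul _), integral_const_mul] at hmono
    rwa [Measure.integral_comp_smul_of_nonneg volume V s (hR := hs0.le),
      finrank_euclideanSpace_fin, smul_eq_mul] at hmono
  -- pass to the limit s → 1⁻
  have hmain : μ * M ≤ n * δ * D := by
    have hpoly : ∀ s : ℝ, 0 < s → s < 1 →
        μ * (1+s) * s^n * M ≤ (2*δ) * ((∑ i ∈ Finset.range n, s^i) * D) := by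
      intro s hs0 hs1
      have h1 := hstep s hs0 hs1
      have hsn : (0:ℝ) < s^n := pow_pos hs0 n
      have h3 : (μ*(1-s^2)/(2*δ)) * M ≤ (s^n)⁻¹ * D - D := by linarith
      have h4 := mul_le_mul_of_nonneg_right h3 hsn.le
      have h5 : ((s^n)⁻¹ * D - D) * s^n = (1 - s^n) * D := by
        field_simp
      have h2 : (μ*(1-s^2)/(2*δ)) * M * s^n ≤ (1 - s^n) * D := by
        rw [← h5]; exact h4
      have hgeom : (1:ℝ) - s^n = (∑ i ∈ Finset.range n, s^i) * (1 - s) := by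
        have h := geom_sum_mul s n
        ring_nf at h ⊢
        linarith [h]
      have hc2δ : (0:ℝ) < 2*δ := by linarith
      have h7 := mul_le_mul_of_nonneg_left h2 hc2δ.le
      have h8 : (2*δ) * ((μ*(1-s^2)/(2*δ)) * M * s^n) = (μ * (1+s) * s^n * M) * (1-s) := by
        field_simp
        ring
      have h9 : (2*δ) * ((1 - s^n) * D)
          = ((2*δ) * ((∑ i ∈ Finset.range n, s^i) * D)) * (1-s) := by
        rw [hgeom]; ring
      have h6 : (μ * (1+s) * s^n * M) * (1-s)
          ≤ ((2*δ) * ((∑ i ∈ Finset.range n, s^i) * D)) * (1-s) := by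
        rw [← h8, ← h9]; exact h7
      exact le_of_mul_le_mul_right h6 (by linarith)
    have hcont : Continuous (fun s : ℝ =>
        (2*δ) * ((∑ i ∈ Finset.range n, s^i) * D) - μ * (1+s) * s^n * M) := by
      apply Continuous.sub
      · exact continuous_const.mul
          ((continuous_finset_sum _ fun i _ => continuous_pow i).mul continuous_const)
      · exact ((continuous_const.mul (continuous_const.add continuous_id)).mul
          (continuous_pow n)).mul continuous_const
    have hlim : Filter.Tendsto (fun s : ℝ =>
          (2*δ) * ((∑ i ∈ Finset.range n, s^i) * D) - μ * (1+s) * s^n * M)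
        (nhdsWithin 1 (Set.Iio 1))
        (nhds ((2*δ) * ((∑ i ∈ Finset.range n, (1:ℝ)^i) * D) - μ * (1+1) * 1^n * M)) :=
      (hcont.tendsto 1).mono_left nhdsWithin_le_nhds
    have hge : 0 ≤ (2*δ) * ((∑ i ∈ Finset.range n, (1:ℝ)^i) * D) - μ * (1+1) * 1^n * M := by
      apply ge_of_tendsto hlim
      filter_upwards [Ioo_mem_nhdsLT_of_mem (Set.mem_Ioc.2 ⟨zero_lt_one, le_refl (1:ℝ)⟩)] with s hs
      linarith [hpoly s hs.1 hs.2]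
    simp only [one_pow, Finset.sum_const, Finset.card_range, nsmul_eq_mul, mul_one] at hge
    linarith [hge]
  -- back to the original coordinates
  have hWy : ∀ y : EuclideanSpace ℝ (Fin n), V (y - xstar) = W y := by
    intro y
    have h : xstar + (y - xstar) = y := by abel
    simp only [hVdef, h]
  have hWint : Integrable W :=
    (hVint.comp_sub_right xstar).congr (Filter.Eventually.of_forall fun y => hWy y)
  have hWsqint : Integrable (fun y => W y * ‖y - xstar‖^2) :=
    (hVsqint.comp_sub_right xstar).congr
      (Filter.Eventually.of_forall fun y =>
        show V (y - xstar) * ‖y - xstar‖^2 = W y * ‖y - xstar‖^2 by rw [hWy])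
  have hDeq : ∫ y, W y = D := by
    rw [hDdef]
    exact (integral_add_left_eq_self W xstar).symm
  have hMeq : ∫ y, W y * ‖y - xstar‖^2 = M := by
    rw [hMdef]
    have h := integral_add_left_eq_self (μ := volume) (fun y => W y * ‖y - xstar‖^2) xstar
    rw [← h]
    apply integral_congr_ae
    apply Filter.Eventually.of_forall
    intro z
    have h2 : xstar + z - xstar = z := by abel
    simp only [hVdef, h2]
  -- Markov inequality
  set A := {y : EuclideanSpace ℝ (Fin n) | r ≤ ‖y - xstar‖} with hAdef
  have hAmeas : MeasurableSet A :=
    measurableSet_le measurable_const ((continuous_id.sub continuous_const).norm.measurable)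
  have hNle : (∫ y in A, W y) * r^2 ≤ M := by
    have h1 : ∫ y in A, W y * r^2 ≤ ∫ y in A, W y * ‖y - xstar‖^2 := by
      apply setIntegral_mono_on ((hWint.mul_const _).integrableOn) hWsqint.integrableOn hAmeas
      intro y hy
      have hy' : r ≤ ‖y - xstar‖ := hy
      have h3 : r^2 ≤ ‖y - xstar‖^2 := by nlinarith [hy', hr]
      exact mul_le_mul_of_nonneg_left h3 (hWnonneg y)
    have h2 : ∫ y in A, W y * ‖y - xstar‖^2 ≤ ∫ y, W y * ‖y - xstar‖^2 :=
      setIntegral_le_integral hWsqint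
        (Filter.Eventually.of_forall fun y => mul_nonneg (hWnonneg y) (by positivity))
    rw [integral_mul_const] at h1
    linarith [h1, h2, hMeq.le, hMeq.ge]
  -- positivity of the denominator
  have hDpos : 0 < ∫ y, W y := by
    rw [integral_pos_iff_support_of_nonneg (fun y => hWnonneg y) hWint]
    obtain ⟨y0, hy0⟩ := hdom
    have hsub : interior {y | f y ≠ ⊤} ⊆ Function.support W := by
      intro y hy
      have hfy : f y ≠ ⊤ := interior_subset hy
      rw [Function.mem_support, hWval y hfy]
      exact (Real.exp_pos _).ne'
    exact lt_of_lt_of_le (isOpen_interior.measure_pos volume ⟨y0, hy0⟩) (measure_mono hsub)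
  -- conclusion
  have hN0 : 0 ≤ ∫ y in A, W y := setIntegral_nonneg hAmeas (fun y _ => hWnonneg y)
  rw [div_le_div_iff₀ hDpos (by positivity)]
  rw [hDeq]
  have h10 : μ * ((∫ y in A, W y) * r^2) ≤ μ * M := mul_le_mul_of_nonneg_left hNle hμpos.le
  nlinarith [h10, hmain]
end

section
/- Let A be a symmetric n × n real matrix with A ⪰ −ρI for some ρ ≥ 0, let b ∈ ℝⁿ, c ∈ ℝ, and define f(y) = (1/2)⟨Ay, y⟩ + ⟨b, y⟩ + c. Then for every x ∈ ℝⁿ, every δ > 0, and every 0 < λ < 1/ρ (with the convention 1/0 = +∞), the barycenter coincides exactly with the proximal point: m_δ(x) = prox_{λf}(x) = (A + (1/λ)I)⁻¹((1/λ)x − b). -/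
open MeasureTheory Real
open scoped RealInnerProductSpace

set_option maxHeartbeats 1000000 in
/-- For a quadratic `f(y) = ½⟪Ay, y⟫ + ⟪b, y⟫ + c` with `A`
symmetric, `A ⪰ -ρI`, and `0 < λ < 1/ρ`, the barycenter coincides exactly with
the proximal point: `m_δ(x) = prox_{λ f}(x) = (A + (1/λ)I)⁻¹((1/λ)x - b)`,
i.e. the unique solution `w` of `(A + (1/λ)I) w = (1/λ)x - b` is the unique
minimizer of `g` and equals `m_δ(x)` for every `δ > 0`. -/
theorem stmt10
    (n : ℕ)
    (A : EuclideanSpace ℝ (Fin n) →L[ℝ] EuclideanSpace ℝ (Fin n))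
    (hsymm : ∀ u v : EuclideanSpace ℝ (Fin n), ⟪A u, v⟫ = ⟪u, A v⟫)
    (ρ : ℝ) (hρ : 0 ≤ ρ)
    (hA : ∀ v : EuclideanSpace ℝ (Fin n), -ρ * ‖v‖ ^ 2 ≤ ⟪A v, v⟫)
    (b : EuclideanSpace ℝ (Fin n)) (c : ℝ)
    (f : EuclideanSpace ℝ (Fin n) → ℝ)
    (hf : ∀ y, f y = 1 / 2 * ⟪A y, y⟫ + ⟪b, y⟫ + c)
    (g : EuclideanSpace ℝ (Fin n) → ℝ)
    (x : EuclideanSpace ℝ (Fin n))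
    (lam : ℝ) (hlam : 0 < lam) (hlamρ : lam * ρ < 1)
    (hg : ∀ y, g y = f y + ‖x - y‖ ^ 2 / (2 * lam))
    (δ : ℝ) (hδ : 0 < δ) :
    ∃ w : EuclideanSpace ℝ (Fin n),
      (A w + (1 / lam) • w = (1 / lam) • x - b) ∧
      (∀ w' : EuclideanSpace ℝ (Fin n),
        A w' + (1 / lam) • w' = (1 / lam) • x - b → w' = w) ∧
      (∫ y, Real.exp (-g y / δ))⁻¹ • (∫ y, Real.exp (-g y / δ) • y) = w ∧
      (∀ y, g w ≤ g y) ∧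
      (∀ y, (∀ z, g y ≤ g z) → y = w) := by
  classical
  have hκ : 0 < 1 / lam := by positivity
  have hμ0 : 0 < 1 / lam - ρ := by
    have h1 : ρ < 1 / lam := by
      rw [lt_div_iff₀ hlam]; nlinarith
    linarith
  set B : EuclideanSpace ℝ (Fin n) →L[ℝ] EuclideanSpace ℝ (Fin n) :=
    A + (1 / lam) • ContinuousLinearMap.id ℝ (EuclideanSpace ℝ (Fin n)) with hBdef
  have hBapp : ∀ v : EuclideanSpace ℝ (Fin n), B v = A v + (1 / lam) • v := by
    intro v; simp [hBdef]
  have hBpos : ∀ v : EuclideanSpace ℝ (Fin n), (1 / lam - ρ) * ‖v‖ ^ 2 ≤ ⟪B v, v⟫ := by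
    intro v
    have h1 : ⟪B v, v⟫ = ⟪A v, v⟫ + (1 / lam) * ‖v‖ ^ 2 := by
      rw [hBapp, inner_add_left, real_inner_smul_left, real_inner_self_eq_norm_sq]
    nlinarith [hA v]
  have hzero : ∀ v : EuclideanSpace ℝ (Fin n), ⟪B v, v⟫ ≤ 0 → v = 0 := by
    intro v hv
    have h1 := hBpos v
    have h4 : ‖v‖ ^ 2 ≤ 0 := by nlinarith
    have h5 : ‖v‖ ^ 2 = 0 := le_antisymm h4 (sq_nonneg _)
    have h6 : ‖v‖ = 0 := by
      have := pow_eq_zero_iff (n := 2) (by norm_num) |>.mp h5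
      exact this
    exact norm_eq_zero.mp h6
  have hBinj : Function.Injective B := by
    intro u v huv
    have h0 : B (u - v) = 0 := by rw [map_sub, huv, sub_self]
    have h1 : u - v = 0 := hzero _ (by rw [h0, inner_zero_left])
    exact sub_eq_zero.mp h1
  have hBsurj : Function.Surjective B :=
    (LinearMap.injective_iff_surjective
      (f := (B : EuclideanSpace ℝ (Fin n) →ₗ[ℝ] EuclideanSpace ℝ (Fin n)))).mp hBinj
  obtain ⟨w, hw⟩ := hBsurj ((1 / lam) • x - b)
  have hw' : A w + (1 / lam) • w = (1 / lam) • x - b := by rw [← hBapp, hw]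
  have huniq : ∀ w' : EuclideanSpace ℝ (Fin n),
      A w' + (1 / lam) • w' = (1 / lam) • x - b → w' = w := by
    intro w' hw''
    exact hBinj (by rw [hBapp, hw'', hw])
  -- key identity
  have hkey : ∀ y : EuclideanSpace ℝ (Fin n),
      g y = g w + 1 / 2 * ⟪B (y - w), y - w⟫ := by
    intro y
    have hy : g y = 1 / 2 * ⟪A y, y⟫ + ⟪b, y⟫ + c + ⟪x - y, x - y⟫ / (2 * lam) := by
      rw [hg, hf, real_inner_self_eq_norm_sq]
    have hww : g w = 1 / 2 * ⟪A w, w⟫ + ⟪b, w⟫ + c + ⟪x - w, x - w⟫ / (2 * lam) := by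
      rw [hg, hf, real_inner_self_eq_norm_sq]
    have hBz : ⟪B (y - w), y - w⟫
        = ⟪A (y - w), y - w⟫ + (1 / lam) * ⟪(y - w : EuclideanSpace ℝ (Fin n)), y - w⟫ := by
      rw [hBapp, inner_add_left, real_inner_smul_left]
    have hweq : ⟪A w + (1 / lam) • w, y - w⟫ = ⟪(1 / lam) • x - b, y - w⟫ := by
      rw [hw']
    rw [hy, hww, hBz]
    simp only [map_sub, inner_sub_left, inner_sub_right, inner_add_left,
      real_inner_smul_left] at hweq ⊢
    have c1 : ⟪A w, y⟫ = ⟪A y, w⟫ := by rw [hsymm, real_inner_comm]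
    have c2 : ⟪(y : EuclideanSpace ℝ (Fin n)), w⟫ = ⟪(w : EuclideanSpace ℝ (Fin n)), y⟫ :=
      real_inner_comm w y
    have c3 : ⟪(y : EuclideanSpace ℝ (Fin n)), x⟫ = ⟪(x : EuclideanSpace ℝ (Fin n)), y⟫ :=
      real_inner_comm x y
    have c4 : ⟪(w : EuclideanSpace ℝ (Fin n)), x⟫ = ⟪(x : EuclideanSpace ℝ (Fin n)), w⟫ :=
      real_inner_comm x w
    simp only [c1, c2, c3, c4] at hweq ⊢
    linear_combination hweq
  have hmin : ∀ y : EuclideanSpace ℝ (Fin n), g w ≤ g y := by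
    intro y
    have h1 : (0 : ℝ) ≤ ⟪B (y - w), y - w⟫ :=
      le_trans (by positivity) (hBpos (y - w))
    rw [hkey y]; linarith
  have hargmin : ∀ y : EuclideanSpace ℝ (Fin n), (∀ z, g y ≤ g z) → y = w := by
    intro y hy
    have h1 : g y ≤ g w := hy w
    have h2 := hkey y
    have h3 : ⟪B (y - w), y - w⟫ ≤ 0 := by linarith
    exact sub_eq_zero.mp (hzero _ h3)
  -- the barycenter computation
  set μ : ℝ := (1 / lam - ρ) / (2 * δ) with hμdef
  have hμpos : 0 < μ := by positivity
  set Cst : ℝ := rexp (-g w / δ) with hCstdef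
  have hCpos : 0 < Cst := Real.exp_pos _
  have hG1 : ∀ z : EuclideanSpace ℝ (Fin n),
      rexp (-g (w + z) / δ) = Cst * rexp (-⟪B z, z⟫ / (2 * δ)) := by
    intro z
    rw [hCstdef, ← Real.exp_add, hkey (w + z), add_sub_cancel_left]
    congr 1
    field_simp
    ring
  have hgauss : ∀ ν : ℝ, 0 < ν →
      Integrable (fun z : EuclideanSpace ℝ (Fin n) => rexp (-ν * ‖z‖ ^ 2)) := by
    intro ν hν
    have h := (GaussianFourier.integrable_cexp_neg_mul_sq_norm_add (b := (ν : ℂ))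
      (by simpa using hν) 0 (0 : EuclideanSpace ℝ (Fin n))).norm
    simpa [Complex.norm_exp, ← Complex.ofReal_pow] using h
  have hgc : Continuous g := by
    have hgeq : g = fun y : EuclideanSpace ℝ (Fin n) =>
        1 / 2 * ⟪A y, y⟫ + ⟪b, y⟫ + c + ‖x - y‖ ^ 2 / (2 * lam) :=
      funext fun y => by rw [hg, hf]
    rw [hgeq]
    have h1 : Continuous fun y : EuclideanSpace ℝ (Fin n) => ⟪A y, y⟫ :=
      A.continuous.inner continuous_id
    have h2 : Continuous fun y : EuclideanSpace ℝ (Fin n) => ⟪b, y⟫ :=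
      continuous_const.inner continuous_id
    exact (((continuous_const.mul h1).add h2).add continuous_const).add
      (((continuous_const.sub continuous_id).norm.pow 2).div_const _)
  have hcont1 : Continuous fun z : EuclideanSpace ℝ (Fin n) => rexp (-g (w + z) / δ) :=
    Real.continuous_exp.comp
      (((hgc.comp (continuous_const.add continuous_id)).neg).div_const δ)
  have hb1 : ∀ z : EuclideanSpace ℝ (Fin n),
      rexp (-⟪B z, z⟫ / (2 * δ)) ≤ rexp (-μ * ‖z‖ ^ 2) := by
    intro z
    apply Real.exp_le_exp.mpr
    have h2 : -⟪B z, z⟫ / (2 * δ) ≤ -((1 / lam - ρ) * ‖z‖ ^ 2) / (2 * δ) :=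
      (div_le_div_iff_of_pos_right (by positivity)).mpr (by linarith [hBpos z])
    calc -⟪B z, z⟫ / (2 * δ) ≤ -((1 / lam - ρ) * ‖z‖ ^ 2) / (2 * δ) := h2
      _ = -μ * ‖z‖ ^ 2 := by rw [hμdef]; ring
  have hInt1 : Integrable (fun z : EuclideanSpace ℝ (Fin n) => rexp (-g (w + z) / δ)) := by
    apply Integrable.mono' ((hgauss μ hμpos).const_mul Cst) hcont1.aestronglyMeasurable
    filter_upwards with z
    rw [Real.norm_eq_abs, abs_of_pos (Real.exp_pos _), hG1 z]
    exact mul_le_mul_of_nonneg_left (hb1 z) hCpos.le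
  have hscalar : ∀ t : ℝ, 0 ≤ t →
      t * rexp (-μ * t ^ 2) ≤ (1 + 2 / μ) * rexp (-(μ / 2) * t ^ 2) := by
    intro t ht
    have hpos2 : (0 : ℝ) < rexp (-(μ / 2) * t ^ 2) := Real.exp_pos _
    have h2μ : (0 : ℝ) < 2 / μ := by positivity
    have h1 : t * rexp (-(μ / 2) * t ^ 2) ≤ 1 + 2 / μ := by
      rcases le_total t 1 with h | h
      · have hle1 : rexp (-(μ / 2) * t ^ 2) ≤ 1 := Real.exp_le_one_iff.mpr (by nlinarith)
        nlinarith
      · have ht0 : (0 : ℝ) < t := by linarith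
        have hexp : (μ / 2) * t ^ 2 + 1 ≤ rexp ((μ / 2) * t ^ 2) := by
          have := Real.add_one_le_exp ((μ / 2) * t ^ 2); linarith
        have hp : (0 : ℝ) < rexp ((μ / 2) * t ^ 2) := Real.exp_pos _
        have ht2 : (1 : ℝ) ≤ t ^ 2 := by nlinarith
        have hposarg : (0 : ℝ) < (μ / 2) * t ^ 2 :=
          lt_of_lt_of_le (by positivity) (le_mul_of_one_le_right (by positivity) ht2)
        have hinv : (rexp ((μ / 2) * t ^ 2))⁻¹ ≤ ((μ / 2) * t ^ 2)⁻¹ :=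
          inv_anti₀ hposarg (by linarith)
        have hre : rexp (-(μ / 2) * t ^ 2) = (rexp ((μ / 2) * t ^ 2))⁻¹ := by
          rw [← Real.exp_neg]; ring_nf
        have h3 : t * rexp (-(μ / 2) * t ^ 2) ≤ t * ((μ / 2) * t ^ 2)⁻¹ := by
          rw [hre]; exact mul_le_mul_of_nonneg_left hinv ht
        have heq : t * ((μ / 2) * t ^ 2)⁻¹ = 2 / (μ * t) := by
          field_simp
        have hfin : 2 / (μ * t) ≤ 2 / μ :=
          div_le_div_of_nonneg_left (by norm_num) hμpos (by nlinarith)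
        rw [heq] at h3
        linarith
    have hsplit : -μ * t ^ 2 = -(μ / 2) * t ^ 2 + -(μ / 2) * t ^ 2 := by ring
    rw [hsplit, Real.exp_add]
    nlinarith
  have hInt2 : Integrable (fun z : EuclideanSpace ℝ (Fin n) => rexp (-g (w + z) / δ) • z) := by
    apply Integrable.mono'
      (((hgauss (μ / 2) (by positivity)).const_mul (Cst * (1 + 2 / μ))))
      ((hcont1.smul continuous_id).aestronglyMeasurable)
    filter_upwards with z
    show ‖rexp (-g (w + z) / δ) • z‖ ≤ _
    rw [norm_smul, Real.norm_eq_abs, abs_of_pos (Real.exp_pos _), hG1 z]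
    have h1 : rexp (-⟪B z, z⟫ / (2 * δ)) * ‖z‖ ≤ (1 + 2 / μ) * rexp (-(μ / 2) * ‖z‖ ^ 2) := by
      calc rexp (-⟪B z, z⟫ / (2 * δ)) * ‖z‖ ≤ rexp (-μ * ‖z‖ ^ 2) * ‖z‖ :=
            mul_le_mul_of_nonneg_right (hb1 z) (norm_nonneg z)
        _ = ‖z‖ * rexp (-μ * ‖z‖ ^ 2) := by ring
        _ ≤ (1 + 2 / μ) * rexp (-(μ / 2) * ‖z‖ ^ 2) := hscalar ‖z‖ (norm_nonneg z)
    calc Cst * rexp (-⟪B z, z⟫ / (2 * δ)) * ‖z‖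
        = Cst * (rexp (-⟪B z, z⟫ / (2 * δ)) * ‖z‖) := by ring
      _ ≤ Cst * ((1 + 2 / μ) * rexp (-(μ / 2) * ‖z‖ ^ 2)) :=
          mul_le_mul_of_nonneg_left h1 hCpos.le
      _ = Cst * (1 + 2 / μ) * rexp (-(μ / 2) * ‖z‖ ^ 2) := by ring
  have hIy1 : Integrable (fun y : EuclideanSpace ℝ (Fin n) => rexp (-g y / δ)) := by
    have h := hInt1.comp_add_left (-w)
    simpa using h
  have hpos : 0 < ∫ y : EuclideanSpace ℝ (Fin n), rexp (-g y / δ) :=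
    integral_exp_pos (f := fun y : EuclideanSpace ℝ (Fin n) => -g y / δ) hIy1
  have heven : ∀ z : EuclideanSpace ℝ (Fin n),
      rexp (-g (w + -z) / δ) = rexp (-g (w + z) / δ) := by
    intro z
    rw [hkey (w + -z), hkey (w + z), add_sub_cancel_left, add_sub_cancel_left,
      map_neg, inner_neg_neg]
  have hodd : (∫ z : EuclideanSpace ℝ (Fin n), rexp (-g (w + z) / δ) • z) = 0 := by
    have h1 : (∫ z : EuclideanSpace ℝ (Fin n), rexp (-g (w + -z) / δ) • (-z))
        = ∫ z : EuclideanSpace ℝ (Fin n), rexp (-g (w + z) / δ) • z :=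
      integral_neg_eq_self (fun z : EuclideanSpace ℝ (Fin n) => rexp (-g (w + z) / δ) • z) volume
    have h2 : (∫ z : EuclideanSpace ℝ (Fin n), rexp (-g (w + -z) / δ) • (-z))
        = - ∫ z : EuclideanSpace ℝ (Fin n), rexp (-g (w + z) / δ) • z := by
      simp_rw [heven, smul_neg]
      exact integral_neg _
    have key : ∀ v : EuclideanSpace ℝ (Fin n), v = -v → v = 0 := fun v hv => by
      have h3 : (2 : ℝ) • v = 0 := by
        rw [two_smul]; nth_rewrite 2 [hv]; exact add_neg_cancel v
      exact (smul_eq_zero.mp h3).resolve_left two_ne_zero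
    exact key _ (h1.symm.trans h2)
  have hI2 : (∫ y : EuclideanSpace ℝ (Fin n), rexp (-g y / δ) • y)
      = (∫ y : EuclideanSpace ℝ (Fin n), rexp (-g y / δ)) • w := by
    rw [← integral_add_left_eq_self (fun y : EuclideanSpace ℝ (Fin n) => rexp (-g y / δ) • y) w,
        ← integral_add_left_eq_self (fun y : EuclideanSpace ℝ (Fin n) => rexp (-g y / δ)) w]
    simp_rw [smul_add]
    rw [integral_add (hInt1.smul_const w) hInt2, integral_smul_const, hodd, add_zero]
  refine ⟨w, hw', huniq, ?_, hmin, hargmin⟩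
  rw [hI2, smul_smul, inv_mul_cancel₀ hpos.ne', one_smul]
end

section
/- Fix n ≥ 1 and λ > 0, and let f(y) = Σ_{i=1}^n max{y_i, 0}. Then prox_{λf}(0) = 0, and for every δ > 0 the barycenter satisfies m_δ(0) = (a_δ, …, a_δ), where a_δ := (∫_ℝ t e^{−φ(t)/δ} dt)/(∫_ℝ e^{−φ(t)/δ} dt) with φ(t) := max{t, 0} + t²/(2λ). Moreover, a_δ = −√(2λδ/π) + O(δ) as δ → 0⁺; that is, there exist C > 0 and δ₀ > 0 such that |a_δ + √(2λδ/π)| ≤ Cδ for all 0 < δ < δ₀. -/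
open MeasureTheory Real

section AuxStmt11
open Set


private lemma aux_h_cont (lam δ : ℝ) :
    Continuous (fun t : ℝ => Real.exp (-(max t 0 + t ^ 2 / (2 * lam)) / δ)) := by
  fun_prop

private lemma aux_h_le {lam δ : ℝ} (hlam : 0 < lam) (hδ : 0 < δ) (t : ℝ) :
    Real.exp (-(max t 0 + t ^ 2 / (2 * lam)) / δ) ≤ Real.exp (-((2 * lam * δ)⁻¹ * t ^ 2)) := by
  apply Real.exp_le_exp.2
  rw [neg_div]
  apply neg_le_neg
  rw [show (2 * lam * δ)⁻¹ * t ^ 2 = (t ^ 2 / (2 * lam)) / δ by field_simp]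
  gcongr
  linarith [le_max_right t (0:ℝ)]

private lemma aux_h_int {lam δ : ℝ} (hlam : 0 < lam) (hδ : 0 < δ) :
    Integrable (fun t : ℝ => Real.exp (-(max t 0 + t ^ 2 / (2 * lam)) / δ)) := by
  apply (integrable_exp_neg_mul_sq (show (0:ℝ) < (2*lam*δ)⁻¹ by positivity)).mono'
    (aux_h_cont lam δ).aestronglyMeasurable
  filter_upwards with t
  rw [Real.norm_eq_abs, abs_of_pos (Real.exp_pos _), neg_mul]
  exact aux_h_le hlam hδ t

private lemma aux_th_int {lam δ : ℝ} (hlam : 0 < lam) (hδ : 0 < δ) :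
    Integrable (fun t : ℝ => t * Real.exp (-(max t 0 + t ^ 2 / (2 * lam)) / δ)) := by
  apply ((integrable_mul_exp_neg_mul_sq (show (0:ℝ) < (2*lam*δ)⁻¹ by positivity)).abs).mono'
    (continuous_id.mul (aux_h_cont lam δ)).aestronglyMeasurable
  filter_upwards with t
  simp only [Pi.mul_apply, id_eq]
  rw [Real.norm_eq_abs, abs_mul, abs_mul, abs_of_pos (Real.exp_pos _),
    abs_of_pos (Real.exp_pos _), neg_mul]
  exact mul_le_mul_of_nonneg_left (aux_h_le hlam hδ t) (abs_nonneg t)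

private lemma aux_h_int_pos {lam δ : ℝ} (hlam : 0 < lam) (hδ : 0 < δ) :
    0 < ∫ t : ℝ, Real.exp (-(max t 0 + t ^ 2 / (2 * lam)) / δ) := by
  rw [integral_pos_iff_support_of_nonneg (fun t => (Real.exp_pos _).le) (aux_h_int hlam hδ)]
  have : (Function.support fun t : ℝ => Real.exp (-(max t 0 + t ^ 2 / (2 * lam)) / δ)) = univ := by
    ext t; simp [Function.mem_support, (Real.exp_pos _).ne']
  rw [this]
  simp

-- ∫_{Iic 0} h = √(π/b)/2 with b = (2 lam δ)⁻¹
private lemma aux_Iic_val {lam δ : ℝ} (hlam : 0 < lam) (hδ : 0 < δ) :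
    ∫ t in Iic (0:ℝ), Real.exp (-(max t 0 + t ^ 2 / (2 * lam)) / δ)
      = Real.sqrt (π * (2 * lam * δ)) / 2 := by
  have hb : (0:ℝ) < (2*lam*δ)⁻¹ := by positivity
  have h1 : ∫ t in Iic (0:ℝ), Real.exp (-(max t 0 + t ^ 2 / (2 * lam)) / δ)
      = ∫ t in Iic (0:ℝ), Real.exp (-((2*lam*δ)⁻¹ * t ^ 2)) := by
    refine setIntegral_congr_fun measurableSet_Iic (fun t ht => ?_)
    rw [mem_Iic] at ht
    rw [max_eq_right ht]
    congr 1
    field_simp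
    ring
  rw [h1]
  have h2 : ∫ t in Iic (0:ℝ), Real.exp (-((2*lam*δ)⁻¹ * t ^ 2))
      = ∫ t in Ioi (0:ℝ), Real.exp (-((2*lam*δ)⁻¹ * t ^ 2)) := by
    rw [show (0:ℝ) = -0 by norm_num, ← integral_comp_neg_Ioi]
    simp
  rw [h2]
  simp_rw [← neg_mul]
  rw [integral_gaussian_Ioi]
  congr 2
  field_simp
-- ∫_{Iic 0} t * h = -(lam*δ)
private lemma aux_tIic_val {lam δ : ℝ} (hlam : 0 < lam) (hδ : 0 < δ) :
    ∫ t in Iic (0:ℝ), t * Real.exp (-(max t 0 + t ^ 2 / (2 * lam)) / δ) = -(lam * δ) := by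
  have hb : (0:ℝ) < (2*lam*δ)⁻¹ := by positivity
  have h1 : ∫ t in Iic (0:ℝ), t * Real.exp (-(max t 0 + t ^ 2 / (2 * lam)) / δ)
      = ∫ t in Iic (0:ℝ), t * Real.exp (-((2*lam*δ)⁻¹) * t ^ 2) := by
    refine setIntegral_congr_fun measurableSet_Iic (fun t ht => ?_)
    rw [mem_Iic] at ht
    rw [max_eq_right ht, neg_mul]
    congr 2
    field_simp
    ring
  rw [h1]
  have h2 : ∫ t in Iic (0:ℝ), t * Real.exp (-((2*lam*δ)⁻¹) * t ^ 2)
      = ∫ t in Ioi (0:ℝ), -t * Real.exp (-((2*lam*δ)⁻¹) * (-t) ^ 2) := by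
    rw [show (0:ℝ) = -0 by norm_num, ← integral_comp_neg_Ioi]
    norm_num
  rw [h2]
  have h3 : ∫ t in Ioi (0:ℝ), -t * Real.exp (-((2*lam*δ)⁻¹) * (-t) ^ 2)
      = -∫ t in Ioi (0:ℝ), t * Real.exp (-((2*lam*δ)⁻¹) * t ^ 2) := by
    rw [← integral_neg]
    congr 1; ext t; ring_nf
  rw [h3]
  have h4 : ∫ t in Ioi (0:ℝ), t * Real.exp (-((2*lam*δ)⁻¹) * t ^ 2)
      = ∫ t in Ioi (0:ℝ), t ^ (1:ℝ) * Real.exp (-((2*lam*δ)⁻¹) * t ^ (2:ℝ)) := by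
    refine setIntegral_congr_fun measurableSet_Ioi (fun t ht => ?_)
    rw [mem_Ioi] at ht
    rw [Real.rpow_one, show (2:ℝ) = ((2:ℕ):ℝ) by norm_num, Real.rpow_natCast]
  rw [h4, integral_rpow_mul_exp_neg_mul_rpow (by norm_num) (by norm_num) hb]
  norm_num [Real.rpow_neg_one, Real.Gamma_one]
  field_simp
-- ∫_{Ioi 0} exp(-δ⁻¹ t) = δ
private lemma aux_exp_val {δ : ℝ} (hδ : 0 < δ) :
    ∫ t in Ioi (0:ℝ), Real.exp (-(δ⁻¹ * t)) = δ := by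
  have h1 : ∫ t in Ioi (0:ℝ), Real.exp (-(δ⁻¹ * t))
      = ∫ t in Ioi (0:ℝ), Real.exp (-δ⁻¹ * t ^ (1:ℝ)) := by
    refine setIntegral_congr_fun measurableSet_Ioi (fun t ht => ?_)
    rw [Real.rpow_one, neg_mul]
  rw [h1, integral_exp_neg_mul_rpow (by norm_num) (by positivity)]
  norm_num [Real.rpow_neg_one, Real.Gamma_two]
-- ∫_{Ioi 0} t exp(-δ⁻¹ t) = δ^2
private lemma aux_texp_val {δ : ℝ} (hδ : 0 < δ) :
    ∫ t in Ioi (0:ℝ), t * Real.exp (-(δ⁻¹ * t)) = δ ^ 2 := by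
  have h1 : ∫ t in Ioi (0:ℝ), t * Real.exp (-(δ⁻¹ * t))
      = ∫ t in Ioi (0:ℝ), t ^ (1:ℝ) * Real.exp (-δ⁻¹ * t ^ (1:ℝ)) := by
    refine setIntegral_congr_fun measurableSet_Ioi (fun t ht => ?_)
    rw [Real.rpow_one, neg_mul]
  rw [h1, integral_rpow_mul_exp_neg_mul_rpow (by norm_num) (by norm_num) (by positivity)]
  norm_num [Real.Gamma_two]
private lemma aux_mono_exp {lam δ t : ℝ} (hlam : 0 < lam) (hδ : 0 < δ) (ht : 0 < t) :
    Real.exp (-(max t 0 + t ^ 2 / (2 * lam)) / δ) ≤ Real.exp (-(δ⁻¹ * t)) := by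
  apply Real.exp_le_exp.2
  rw [max_eq_left ht.le, neg_div]
  apply neg_le_neg
  rw [inv_mul_eq_div]
  gcongr
  have h0 : 0 ≤ t ^ 2 / (2 * lam) := by positivity
  linarith

private lemma aux_E2_le {lam δ : ℝ} (hlam : 0 < lam) (hδ : 0 < δ) :
    (∫ t in Ioi (0:ℝ), Real.exp (-(max t 0 + t ^ 2 / (2 * lam)) / δ)) ≤ δ := by
  have hcomp : IntegrableOn (fun t : ℝ => Real.exp (-(δ⁻¹ * t))) (Ioi 0) := by
    simpa [neg_mul] using exp_neg_integrableOn_Ioi 0 (inv_pos.2 hδ)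
  calc (∫ t in Ioi (0:ℝ), Real.exp (-(max t 0 + t ^ 2 / (2 * lam)) / δ))
      ≤ ∫ t in Ioi (0:ℝ), Real.exp (-(δ⁻¹ * t)) := by
        refine setIntegral_mono_on (aux_h_int hlam hδ).integrableOn hcomp measurableSet_Ioi
          (fun t ht => aux_mono_exp hlam hδ ht)
    _ = δ := aux_exp_val hδ

private lemma aux_E1_le {lam δ : ℝ} (hlam : 0 < lam) (hδ : 0 < δ) :
    (∫ t in Ioi (0:ℝ), t * Real.exp (-(max t 0 + t ^ 2 / (2 * lam)) / δ)) ≤ δ ^ 2 := by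
  have hcomp : IntegrableOn (fun t : ℝ => t * Real.exp (-(δ⁻¹ * t))) (Ioi 0) := by
    have h := integrableOn_rpow_mul_exp_neg_mul_rpow (p := 1) (s := 1) (b := δ⁻¹)
      (by norm_num) (by norm_num) (inv_pos.2 hδ)
    refine h.congr_fun (fun t ht => ?_) measurableSet_Ioi
    simp only [Real.rpow_one, neg_mul]
  calc (∫ t in Ioi (0:ℝ), t * Real.exp (-(max t 0 + t ^ 2 / (2 * lam)) / δ))
      ≤ ∫ t in Ioi (0:ℝ), t * Real.exp (-(δ⁻¹ * t)) := by
        refine setIntegral_mono_on (aux_th_int hlam hδ).integrableOn hcomp measurableSet_Ioi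
          (fun t ht => ?_)
        rw [mem_Ioi] at ht
        exact mul_le_mul_of_nonneg_left (aux_mono_exp hlam hδ ht) ht.le
    _ = δ ^ 2 := aux_texp_val hδ

private lemma aux_alg {lam δ S Q E1 E2 : ℝ} (hlam : 0 < lam) (hδ : 0 < δ) (hδ1 : δ < 1)
    (hSpos : 0 < S) (hQpos : 0 < Q) (hS2 : S ^ 2 = π * lam * δ / 2)
    (hE1nn : 0 ≤ E1) (hE2nn : 0 ≤ E2) (hE1le : E1 ≤ δ ^ 2) (hE2le : E2 ≤ δ)
    (hSl : Q * δ ≤ S) :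
    |(-(lam * δ) + E1) / (S + E2) + Real.sqrt (2 * lam * δ / π)| ≤ (Q⁻¹ + 2 / π) * δ := by
  have hden : 0 < S + E2 := by linarith
  have hsqrt : Real.sqrt (2 * lam * δ / π) = lam * δ / S := by
    rw [show 2 * lam * δ / π = (lam * δ / S) ^ 2 by
      rw [div_pow, hS2]; field_simp]
    exact Real.sqrt_sq (by positivity)
  rw [hsqrt]
  have key : (-(lam * δ) + E1) / (S + E2) + lam * δ / S
      = (E1 * S + lam * δ * E2) / ((S + E2) * S) := by
    field_simp; ring
  rw [key, abs_of_nonneg (div_nonneg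
    (add_nonneg (mul_nonneg hE1nn hSpos.le) (mul_nonneg (by positivity) hE2nn))
    (mul_pos hden hSpos).le)]
  rw [add_div]
  have term1 : E1 * S / ((S + E2) * S) ≤ Q⁻¹ * δ := by
    rw [mul_div_mul_right _ _ hSpos.ne']
    calc E1 / (S + E2) ≤ δ ^ 2 / S := div_le_div₀ (by positivity) hE1le hSpos (by linarith)
      _ ≤ Q⁻¹ * δ := by
          rw [div_le_iff₀ hSpos]
          calc δ ^ 2 = Q⁻¹ * δ * (Q * δ) := by
                rw [show Q⁻¹ * δ * (Q * δ) = Q⁻¹ * Q * δ ^ 2 by ring,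
                  inv_mul_cancel₀ hQpos.ne', one_mul]
            _ ≤ Q⁻¹ * δ * S := mul_le_mul_of_nonneg_left hSl (by positivity)
  have term2 : lam * δ * E2 / ((S + E2) * S) ≤ 2 / π * δ := by
    calc lam * δ * E2 / ((S + E2) * S) ≤ lam * δ * δ / (S * S) := by
          refine div_le_div₀ (by positivity)
            (mul_le_mul_of_nonneg_left hE2le (by positivity)) (by positivity)
            (mul_le_mul_of_nonneg_right (by linarith) hSpos.le)
      _ = 2 / π * δ := by
          rw [show S * S = π * lam * δ / 2 by rw [← sq]; exact hS2]
          rw [div_eq_iff (by positivity : (π * lam * δ / 2 : ℝ) ≠ 0)]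
          field_simp
  calc E1 * S / ((S + E2) * S) + lam * δ * E2 / ((S + E2) * S)
      ≤ Q⁻¹ * δ + 2 / π * δ := add_le_add term1 term2
    _ = (Q⁻¹ + 2 / π) * δ := by ring

private lemma aux_part3 {lam : ℝ} (hlam : 0 < lam) {δ : ℝ} (hδ : 0 < δ) (hδ1 : δ < 1) :
    |(∫ t : ℝ, t * Real.exp (-(max t 0 + t ^ 2 / (2 * lam)) / δ)) /
      (∫ t : ℝ, Real.exp (-(max t 0 + t ^ 2 / (2 * lam)) / δ)) + Real.sqrt (2 * lam * δ / π)|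
      ≤ ((Real.sqrt (π * lam / 2))⁻¹ + 2 / π) * δ := by
  have hI0 : (∫ t : ℝ, Real.exp (-(max t 0 + t ^ 2 / (2 * lam)) / δ))
      = Real.sqrt (π * (2 * lam * δ)) / 2
        + ∫ t in Ioi (0:ℝ), Real.exp (-(max t 0 + t ^ 2 / (2 * lam)) / δ) := by
    rw [← integral_add_compl measurableSet_Iic (aux_h_int hlam hδ), compl_Iic,
      aux_Iic_val hlam hδ]
  have hI1 : (∫ t : ℝ, t * Real.exp (-(max t 0 + t ^ 2 / (2 * lam)) / δ))
      = -(lam * δ) + ∫ t in Ioi (0:ℝ), t * Real.exp (-(max t 0 + t ^ 2 / (2 * lam)) / δ) := by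
    rw [← integral_add_compl measurableSet_Iic (aux_th_int hlam hδ), compl_Iic,
      aux_tIic_val hlam hδ]
  rw [hI0, hI1]
  have hSsqrt : Real.sqrt (π * (2 * lam * δ)) / 2 = Real.sqrt (π * lam * δ / 2) := by
    rw [show π * (2 * lam * δ) = 2 ^ 2 * (π * lam * δ / 2) by ring,
      Real.sqrt_mul (by positivity), Real.sqrt_sq (by norm_num : (0:ℝ) ≤ 2)]
    ring
  refine aux_alg hlam hδ hδ1 (by positivity) (by positivity) ?_
    (setIntegral_nonneg measurableSet_Ioi
      (fun t ht => mul_nonneg (le_of_lt ht) (Real.exp_pos _).le))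
    (setIntegral_nonneg measurableSet_Ioi (fun t _ => (Real.exp_pos _).le))
    (aux_E1_le hlam hδ) (aux_E2_le hlam hδ) ?_
  · rw [hSsqrt, sq_sqrt (by positivity)]
  · rw [hSsqrt]
    have hQδ : Real.sqrt (π * lam / 2) * δ = Real.sqrt ((π * lam / 2) * δ ^ 2) := by
      rw [Real.sqrt_mul (by positivity), Real.sqrt_sq hδ.le]
    rw [hQδ]
    apply Real.sqrt_le_sqrt
    nlinarith [Real.pi_pos,
      mul_nonneg (mul_nonneg Real.pi_pos.le hlam.le) (mul_nonneg hδ.le (sub_nonneg.2 hδ1.le))]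
private lemma aux_key {n : ℕ} {lam δ : ℝ} (hlam : 0 < lam) (hδ : 0 < δ)
    (g : EuclideanSpace ℝ (Fin n) → ℝ)
    (hgy : ∀ y, g y = (∑ i, max (y i) 0) + ‖y‖ ^ 2 / (2 * lam))
    (y : EuclideanSpace ℝ (Fin n)) :
    Real.exp (-g y / δ) = ∏ j, Real.exp (-(max (y j) 0 + (y j) ^ 2 / (2 * lam)) / δ) := by
  rw [← Real.exp_sum, hgy]
  congr 1
  have hnorm : ‖y‖ ^ 2 = ∑ j, (y j) ^ 2 := by
    rw [EuclideanSpace.norm_eq, sq_sqrt (by positivity)]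
    simp [Real.norm_eq_abs, sq_abs]
  rw [hnorm, Finset.sum_div, ← Finset.sum_add_distrib, neg_div, Finset.sum_div,
    ← Finset.sum_neg_distrib]
  exact Finset.sum_congr rfl (fun j _ => (neg_div _ _).symm)

private lemma aux_prod_split {n : ℕ} (H : ℝ → ℝ) (j : Fin n) (x : Fin n → ℝ) :
    (∏ k, (if k = j then (fun t => t * H t) else H) (x k)) = (∏ k, H (x k)) * x j := by
  classical
  rw [← Finset.mul_prod_erase Finset.univ (fun k => (if k = j then (fun t => t * H t) else H) (x k))
      (Finset.mem_univ j),
    ← Finset.mul_prod_erase Finset.univ (fun k => H (x k)) (Finset.mem_univ j)]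
  have h2 : ∀ k ∈ Finset.univ.erase j,
      (if k = j then (fun t : ℝ => t * H t) else H) (x k) = H (x k) := by
    intro k hk
    rw [if_neg (Finset.ne_of_mem_erase hk)]
  rw [Finset.prod_congr rfl h2, if_pos rfl]
  ring

private lemma aux_fj_int {n : ℕ} {lam δ : ℝ} (hlam : 0 < lam) (hδ : 0 < δ) (j k : Fin n) :
    Integrable ((if k = j then (fun t => t * Real.exp (-(max t 0 + t ^ 2 / (2 * lam)) / δ))
      else (fun t => Real.exp (-(max t 0 + t ^ 2 / (2 * lam)) / δ)))) := by
  by_cases hk : k = j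
  · rw [if_pos hk]; exact aux_th_int hlam hδ
  · rw [if_neg hk]; exact aux_h_int hlam hδ

private lemma aux_part2 {n : ℕ} {lam δ : ℝ} (hlam : 0 < lam) (hδ : 0 < δ)
    (g : EuclideanSpace ℝ (Fin n) → ℝ)
    (hgy : ∀ y, g y = (∑ i, max (y i) 0) + ‖y‖ ^ 2 / (2 * lam)) (i : Fin n) :
    ((∫ y, Real.exp (-g y / δ))⁻¹ • (∫ y, Real.exp (-g y / δ) • y) :
        EuclideanSpace ℝ (Fin n)) i
      = (∫ t : ℝ, t * Real.exp (-(max t 0 + t ^ 2 / (2 * lam)) / δ)) /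
        (∫ t : ℝ, Real.exp (-(max t 0 + t ^ 2 / (2 * lam)) / δ)) := by
  classical
  have hmp : MeasurePreserving ((MeasurableEquiv.toLp 2 (Fin n → ℝ))) :=
    (EuclideanSpace.volume_preserving_symm_measurableEquiv_toLp (Fin n)).symm
  -- scalar coordinate integrands are integrable
  have Hh : ∀ j : Fin n, Integrable (fun y : EuclideanSpace ℝ (Fin n) =>
      Real.exp (-g y / δ) * y j) := by
    intro j
    rw [← hmp.integrable_comp_emb (MeasurableEquiv.measurableEmbedding _)]
    refine (Integrable.fintype_prod
      (f := fun k => (if k = j then (fun t => t * Real.exp (-(max t 0 + t ^ 2 / (2 * lam)) / δ))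
        else (fun t => Real.exp (-(max t 0 + t ^ 2 / (2 * lam)) / δ))))
      (aux_fj_int hlam hδ j)).congr (Filter.Eventually.of_forall (fun x => ?_))
    simp only [Function.comp_apply]
    rw [aux_prod_split, aux_key hlam hδ g hgy]
    rfl
  -- integrability of the vector-valued integrand
  have HF : Integrable (fun y : EuclideanSpace ℝ (Fin n) => Real.exp (-g y / δ) • y) := by
    have heq : (fun y : EuclideanSpace ℝ (Fin n) => Real.exp (-g y / δ) • y)
        = fun y => ∑ j, (Real.exp (-g y / δ) * y j) • (EuclideanSpace.single j (1:ℝ)) := by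
      funext y
      ext k
      rw [WithLp.ofLp_sum, Finset.sum_apply]
      simp [EuclideanSpace.single_apply]
    rw [heq]
    exact integrable_finset_sum _ (fun j _ => (Hh j).smul_const _)
  -- coordinate of the vector integral
  have hnum : (∫ y : EuclideanSpace ℝ (Fin n), Real.exp (-g y / δ) • y) i
      = ∫ y : EuclideanSpace ℝ (Fin n), Real.exp (-g y / δ) * y i := by
    have hcomm := (EuclideanSpace.proj (𝕜 := ℝ) i).integral_comp_comm HF
    calc (∫ y : EuclideanSpace ℝ (Fin n), Real.exp (-g y / δ) • y) i
        = EuclideanSpace.proj (𝕜 := ℝ) i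
            (∫ y : EuclideanSpace ℝ (Fin n), Real.exp (-g y / δ) • y) := rfl
      _ = ∫ y : EuclideanSpace ℝ (Fin n),
            EuclideanSpace.proj (𝕜 := ℝ) i (Real.exp (-g y / δ) • y) := hcomm.symm
      _ = ∫ y : EuclideanSpace ℝ (Fin n), Real.exp (-g y / δ) * y i := rfl
  -- value of the denominator
  have hden : (∫ y : EuclideanSpace ℝ (Fin n), Real.exp (-g y / δ))
      = (∫ t : ℝ, Real.exp (-(max t 0 + t ^ 2 / (2 * lam)) / δ)) ^ n := by
    rw [← hmp.integral_comp']
    have : (∫ x : Fin n → ℝ,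
        Real.exp (-g ((MeasurableEquiv.toLp 2 (Fin n → ℝ)) x) / δ))
        = ∫ x : Fin n → ℝ, ∏ k, Real.exp (-(max (x k) 0 + (x k) ^ 2 / (2 * lam)) / δ) := by
      congr 1; funext x
      rw [aux_key hlam hδ g hgy]
      rfl
    rw [this, integral_fintype_prod_volume_eq_pow (ι := Fin n)
      (fun t => Real.exp (-(max t 0 + t ^ 2 / (2 * lam)) / δ)), Fintype.card_fin]
  -- value of the numerator coordinate
  have hnum2 : (∫ y : EuclideanSpace ℝ (Fin n), Real.exp (-g y / δ) * y i)
      = (∫ t : ℝ, t * Real.exp (-(max t 0 + t ^ 2 / (2 * lam)) / δ))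
        * (∫ t : ℝ, Real.exp (-(max t 0 + t ^ 2 / (2 * lam)) / δ)) ^ (n - 1) := by
    rw [← hmp.integral_comp']
    have h1 : (∫ x : Fin n → ℝ,
        Real.exp (-g ((MeasurableEquiv.toLp 2 (Fin n → ℝ)) x) / δ)
          * ((MeasurableEquiv.toLp 2 (Fin n → ℝ)) x) i)
        = ∫ x : Fin n → ℝ, ∏ k,
            (if k = i then (fun t => t * Real.exp (-(max t 0 + t ^ 2 / (2 * lam)) / δ))
              else (fun t => Real.exp (-(max t 0 + t ^ 2 / (2 * lam)) / δ))) (x k) := by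
      congr 1; funext x
      rw [aux_prod_split, aux_key hlam hδ g hgy]
      rfl
    rw [h1, integral_fintype_prod_volume_eq_prod (ι := Fin n)
      (fun k => (if k = i then (fun t => t * Real.exp (-(max t 0 + t ^ 2 / (2 * lam)) / δ))
        else (fun t => Real.exp (-(max t 0 + t ^ 2 / (2 * lam)) / δ)))),
      ← Finset.mul_prod_erase Finset.univ _ (Finset.mem_univ i)]
    have h2 : ∀ k ∈ Finset.univ.erase i,
        (∫ t : ℝ, (if k = i then (fun t => t * Real.exp (-(max t 0 + t ^ 2 / (2 * lam)) / δ))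
          else (fun t => Real.exp (-(max t 0 + t ^ 2 / (2 * lam)) / δ))) t)
        = ∫ t : ℝ, Real.exp (-(max t 0 + t ^ 2 / (2 * lam)) / δ) := by
      intro k hk
      rw [if_neg (Finset.ne_of_mem_erase hk)]
    rw [Finset.prod_congr rfl h2, Finset.prod_const, Finset.card_erase_of_mem
      (Finset.mem_univ i), Finset.card_univ, Fintype.card_fin, if_pos rfl]
  -- conclude
  have hI0pos : 0 < ∫ t : ℝ, Real.exp (-(max t 0 + t ^ 2 / (2 * lam)) / δ) :=
    aux_h_int_pos hlam hδ
  have hni : n - 1 + 1 = n := Nat.succ_pred_eq_of_pos i.pos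
  rw [PiLp.smul_apply, hnum, hnum2, hden, smul_eq_mul, eq_div_iff hI0pos.ne']
  rw [show ∀ A B : ℝ, (A ^ n)⁻¹ * (B * A ^ (n - 1)) * A = (A ^ n)⁻¹ * (A ^ (n - 1) * A) * B
    from fun A B => by ring, ← pow_succ, hni,
    inv_mul_cancel₀ (pow_ne_zero n hI0pos.ne'), one_mul]
end AuxStmt11

/-- For `f(y) = Σᵢ max{yᵢ, 0}` and `x = 0`:
`prox_{λ f}(0) = 0`; for every `δ > 0` the barycenter is
`m_δ(0) = (a_δ, …, a_δ)` with
`a_δ = (∫ t e^{-φ(t)/δ} dt)/(∫ e^{-φ(t)/δ} dt)`, `φ(t) = max{t,0} + t²/(2λ)`;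
and `a_δ = -√(2λδ/π) + O(δ)` as `δ → 0⁺`. -/
theorem stmt11
    (n : ℕ) (hn : 1 ≤ n) (lam : ℝ) (hlam : 0 < lam)
    (f : EuclideanSpace ℝ (Fin n) → ℝ)
    (hf : ∀ y, f y = ∑ i, max (y i) 0)
    (g : EuclideanSpace ℝ (Fin n) → ℝ)
    (hg : ∀ y, g y = f y + ‖y‖ ^ 2 / (2 * lam))
    (a : ℝ → ℝ)
    (ha : ∀ δ, a δ = (∫ t : ℝ, t * Real.exp (-(max t 0 + t ^ 2 / (2 * lam)) / δ)) /
      (∫ t : ℝ, Real.exp (-(max t 0 + t ^ 2 / (2 * lam)) / δ))) :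
    (∀ y, g 0 ≤ g y) ∧
    (∀ δ : ℝ, 0 < δ → ∀ i : Fin n,
      ((∫ y, Real.exp (-g y / δ))⁻¹ • (∫ y, Real.exp (-g y / δ) • y) :
        EuclideanSpace ℝ (Fin n)) i = a δ) ∧
    (∃ c > 0, ∃ δ₀ > 0, ∀ δ : ℝ, 0 < δ → δ < δ₀ →
      |a δ + Real.sqrt (2 * lam * δ / Real.pi)| ≤ c * δ) := by
  have hgy : ∀ y, g y = (∑ i, max (y i) 0) + ‖y‖ ^ 2 / (2 * lam) := by
    intro y; rw [hg, hf]
  refine ⟨?_, ?_, ?_⟩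
  · intro y
    have h0 : g 0 = 0 := by
      rw [hgy]
      simp
    rw [h0, hgy y]
    have h1 : 0 ≤ ∑ i, max (y i) 0 :=
      Finset.sum_nonneg fun i _ => le_max_right _ _
    have h2 : 0 ≤ ‖y‖ ^ 2 / (2 * lam) := by positivity
    linarith
  · intro δ hδ i
    rw [ha δ]
    exact aux_part2 hlam hδ g hgy i
  · refine ⟨(Real.sqrt (Real.pi * lam / 2))⁻¹ + 2 / Real.pi, by positivity, 1, one_pos, ?_⟩
    intro δ hδ hδ1
    rw [ha δ]
    exact aux_part3 hlam hδ hδ1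
end

section
/- Fix λ > 0 and set μ := 1/λ. For α ∈ (0, π/2) and n ≥ 2, let K_α := {y ∈ ℝⁿ : ⟨y, e₁⟩ ≥ ‖y‖ cos α} be the circular cone around e₁, and let m_δ(0) := (∫_{K_α} y e^{−‖y‖²/(2δλ)} dy)/(∫_{K_α} e^{−‖y‖²/(2δλ)} dy). Then for every ε ∈ (0, 1) there exist n ≥ 2 and α ∈ (0, π/2) such that for all δ > 0, ‖m_δ(0)‖ ≥ (1 − ε)√(nδ/μ). In particular, the bound ‖m_δ(x) − prox_{λf}(x)‖ ≤ √(nδ/μ) is sharp. -/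
open MeasureTheory Real Set Pointwise
open scoped RealInnerProductSpace


variable {n : ℕ}

lemma aux_gauss_integrable {c : ℝ} (hc : 0 < c) :
    Integrable (fun v : EuclideanSpace ℝ (Fin n) ↦ Real.exp (-‖v‖ ^ 2 / c)) := by
  have h := (GaussianFourier.integrable_cexp_neg_mul_sq_norm_add
    (V := EuclideanSpace ℝ (Fin n)) (b := (1/c : ℂ)) (by simpa using hc) 0 0).norm
  have heq : (fun v : EuclideanSpace ℝ (Fin n) ↦ Real.exp (-‖v‖ ^ 2 / c)) =
      fun v : EuclideanSpace ℝ (Fin n) ↦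
        ‖Complex.exp (-(1/c : ℂ) * (‖v‖ : ℂ) ^ 2 + 0 * ((inner ℝ (0 : EuclideanSpace ℝ (Fin n)) v : ℝ) : ℂ))‖ := by
    funext v
    rw [Complex.norm_exp]
    have : (-(1/c : ℂ) * (‖v‖ : ℂ) ^ 2 + 0 * ((inner ℝ (0 : EuclideanSpace ℝ (Fin n)) v : ℝ) : ℂ))
        = ((-‖v‖ ^ 2 / c : ℝ) : ℂ) := by push_cast; ring
    rw [this, Complex.ofReal_re]
  rw [heq]; exact h

lemma aux_pointwise {c t : ℝ} (hc : 0 < c) (ht0 : 0 ≤ t) :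
    t * Real.exp (-t ^ 2 / c) ≤ Real.sqrt c * Real.exp (-t ^ 2 / (2 * c)) := by
  set s := Real.sqrt c with hs
  have hs0 : 0 < s := Real.sqrt_pos.mpr hc
  have hsc : s ^ 2 = c := Real.sq_sqrt hc.le
  have h3 : t ≤ s * (t ^ 2 / (2 * c) + 1) := by
    rw [← hsc]
    rw [div_add' _ _ _ (by positivity), mul_div_assoc', le_div_iff₀ (by positivity)]
    nlinarith [mul_nonneg hs0.le (sq_nonneg (t - s))]
  have h4 : t ≤ s * Real.exp (t ^ 2 / (2 * c)) := by
    refine h3.trans (mul_le_mul_of_nonneg_left ?_ hs0.le)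
    linarith [Real.add_one_le_exp (t ^ 2 / (2 * c))]
  calc t * Real.exp (-t ^ 2 / c)
      ≤ (s * Real.exp (t ^ 2 / (2 * c))) * Real.exp (-t ^ 2 / c) :=
        mul_le_mul_of_nonneg_right h4 (Real.exp_nonneg _)
    _ = s * Real.exp (-t ^ 2 / (2 * c)) := by
        rw [mul_assoc, ← Real.exp_add]
        congr 1
        field_simp
        ring

lemma aux_norm_gauss_integrable {c : ℝ} (hc : 0 < c) :
    Integrable (fun v : EuclideanSpace ℝ (Fin n) ↦ ‖v‖ * Real.exp (-‖v‖ ^ 2 / c)) := by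
  have h2 := aux_gauss_integrable (n := n) (c := 2 * c) (by linarith)
  apply Integrable.mono' (h2.const_mul (Real.sqrt c))
  · exact (continuous_norm.mul (Real.continuous_exp.comp
      ((continuous_norm.pow 2).neg.div_const c))).aestronglyMeasurable
  · filter_upwards with v
    rw [Real.norm_eq_abs, abs_of_nonneg (by positivity)]
    exact aux_pointwise hc (norm_nonneg v)

lemma coneSet_measurable {ca : ℝ} {u : EuclideanSpace ℝ (Fin n)} :
    MeasurableSet {y : EuclideanSpace ℝ (Fin n) | ‖y‖ * ca ≤ ⟪y, u⟫} :=
  (isClosed_le (continuous_norm.mul continuous_const)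
    (continuous_id.inner continuous_const)).measurableSet

lemma coneSet_smul {ca : ℝ} {u : EuclideanSpace ℝ (Fin n)} {a : ℝ} (ha : 0 < a) :
    a • {y : EuclideanSpace ℝ (Fin n) | ‖y‖ * ca ≤ ⟪y, u⟫}
      = {y : EuclideanSpace ℝ (Fin n) | ‖y‖ * ca ≤ ⟪y, u⟫} := by
  ext y
  rw [mem_smul_set_iff_inv_smul_mem₀ ha.ne']
  simp only [mem_setOf_eq, norm_smul, real_inner_smul_left, norm_inv, Real.norm_eq_abs,
    abs_of_pos ha]
  rw [mul_assoc, mul_le_mul_iff_right₀ (inv_pos.mpr ha)]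

lemma coneZ_pos {ca : ℝ} {u : EuclideanSpace ℝ (Fin n)} (hca0 : 0 ≤ ca) (hca1 : ca < 1)
    (hu : ‖u‖ = 1) {c : ℝ} (hc : 0 < c) :
    0 < ∫ y in {y : EuclideanSpace ℝ (Fin n) | ‖y‖ * ca ≤ ⟪y, u⟫}, Real.exp (-‖y‖ ^ 2 / c) := by
  rw [setIntegral_pos_iff_support_of_nonneg_ae
    (Filter.Eventually.of_forall fun y => Real.exp_nonneg _)
    ((aux_gauss_integrable hc).integrableOn)]
  have hsub : Metric.ball u ((1 - ca) / 2) ⊆ {y : EuclideanSpace ℝ (Fin n) | ‖y‖ * ca ≤ ⟪y, u⟫} := by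
    intro y hy
    rw [Metric.mem_ball, dist_eq_norm] at hy
    have h1 : |⟪y - u, u⟫| ≤ ‖y - u‖ := by
      have := abs_real_inner_le_norm (y - u) u
      rwa [hu, mul_one] at this
    have h2 : ⟪y - u, u⟫ = ⟪y, u⟫ - 1 := by
      rw [inner_sub_left, real_inner_self_eq_norm_sq, hu]; norm_num
    have h3 : ‖y‖ ≤ 1 + ‖y - u‖ := by
      calc ‖y‖ = ‖u + (y - u)‖ := by rw [add_sub_cancel]
        _ ≤ ‖u‖ + ‖y - u‖ := norm_add_le _ _
        _ = 1 + ‖y - u‖ := by rw [hu]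
    have h4 := abs_le.mp h1
    show ‖y‖ * ca ≤ ⟪y, u⟫
    nlinarith [norm_nonneg (y - u)]
  refine lt_of_lt_of_le (Metric.measure_ball_pos volume u (by linarith : (0:ℝ) < (1 - ca) / 2))
    (measure_mono ?_)
  intro y hy
  exact ⟨Real.exp_ne_zero _, hsub hy⟩

lemma coneZR_le {ca : ℝ} {u : EuclideanSpace ℝ (Fin n)} {a S c : ℝ}
    (ha0 : 0 < a) (ha1 : a ≤ 1) (hS : 0 ≤ S) (hc : 0 < c) :
    ∫ y in {y : EuclideanSpace ℝ (Fin n) | ‖y‖ * ca ≤ ⟪y, u⟫} ∩ Metric.closedBall 0 (a * S),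
        Real.exp (-‖y‖ ^ 2 / c) ≤
      a ^ n * Real.exp ((1 - a ^ 2) * S ^ 2 / c) *
        ∫ y in {y : EuclideanSpace ℝ (Fin n) | ‖y‖ * ca ≤ ⟪y, u⟫} ∩ Metric.closedBall 0 S,
          Real.exp (-‖y‖ ^ 2 / c) := by
  set K := {y : EuclideanSpace ℝ (Fin n) | ‖y‖ * ca ≤ ⟪y, u⟫} with hK
  set s := K ∩ Metric.closedBall 0 S with hs
  have hsmeas : MeasurableSet s := coneSet_measurable.inter Metric.isClosed_closedBall.measurableSet
  have hset : K ∩ Metric.closedBall 0 (a * S) = a • s := by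
    rw [hs, smul_set_inter₀ ha0.ne', coneSet_smul ha0, smul_closedBall _ _ hS, smul_zero,
      Real.norm_eq_abs, abs_of_pos ha0]
  have hcv := Measure.setIntegral_comp_smul_of_pos volume
    (fun y : EuclideanSpace ℝ (Fin n) ↦ Real.exp (-‖y‖ ^ 2 / c)) s ha0
  rw [finrank_euclideanSpace_fin] at hcv
  have h1 : ∫ y in a • s, Real.exp (-‖y‖ ^ 2 / c)
      = a ^ n * ∫ x in s, Real.exp (-‖a • x‖ ^ 2 / c) := by
    rw [hcv, smul_eq_mul, ← mul_assoc, mul_inv_cancel₀ (by positivity), one_mul]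
  have hint1 : Integrable (fun x : EuclideanSpace ℝ (Fin n) ↦ Real.exp (-‖a • x‖ ^ 2 / c)) := by
    have h := aux_gauss_integrable (n := n) (c := c / a ^ 2) (by positivity)
    convert h using 2 with x
    rw [norm_smul, Real.norm_eq_abs, abs_of_pos ha0, mul_pow]
    congr 1
    rw [div_div_eq_mul_div]
    ring_nf
  have h2 : ∫ x in s, Real.exp (-‖a • x‖ ^ 2 / c)
      ≤ ∫ x in s, Real.exp ((1 - a ^ 2) * S ^ 2 / c) * Real.exp (-‖x‖ ^ 2 / c) := by
    apply setIntegral_mono_on hint1.integrableOn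
      (((aux_gauss_integrable hc).const_mul _).integrableOn) hsmeas
    intro x hx
    have hxS : ‖x‖ ≤ S := by
      have := hx.2
      rwa [Metric.mem_closedBall, dist_zero_right] at this
    rw [norm_smul, Real.norm_eq_abs, abs_of_pos ha0, mul_pow, ← Real.exp_add]
    apply Real.exp_le_exp.mpr
    have hkey : (1 - a ^ 2) * S ^ 2 / c + -‖x‖ ^ 2 / c - (-(a ^ 2 * ‖x‖ ^ 2) / c)
        = ((1 - a ^ 2) * (S ^ 2 - ‖x‖ ^ 2)) / c := by ring
    have hnn : 0 ≤ ((1 - a ^ 2) * (S ^ 2 - ‖x‖ ^ 2)) / c := by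
      apply div_nonneg _ hc.le
      apply mul_nonneg (by nlinarith) (by nlinarith [norm_nonneg x])
    linarith [hkey ▸ hnn]
  rw [integral_const_mul] at h2
  rw [hset, h1, mul_assoc]
  exact mul_le_mul_of_nonneg_left h2 (by positivity)

lemma key_bound {n : ℕ} (u : EuclideanSpace ℝ (Fin n)) (hu : ‖u‖ = 1)
    {a ca c : ℝ} (ha0 : 0 < a) (ha1 : a < 1) (hca0 : 0 < ca) (hca1 : ca < 1) (hc : 0 < c) :
    ca * (a * Real.sqrt (n * c / 2)) * (1 - (a * Real.exp ((1 - a ^ 2) / 2)) ^ n) ≤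
      ‖(∫ y in {y : EuclideanSpace ℝ (Fin n) | ‖y‖ * ca ≤ ⟪y, u⟫}, Real.exp (-‖y‖ ^ 2 / c))⁻¹ •
        ∫ y in {y : EuclideanSpace ℝ (Fin n) | ‖y‖ * ca ≤ ⟪y, u⟫},
          Real.exp (-‖y‖ ^ 2 / c) • y‖ := by
  set K := {y : EuclideanSpace ℝ (Fin n) | ‖y‖ * ca ≤ ⟪y, u⟫} with hK
  set f : EuclideanSpace ℝ (Fin n) → ℝ := fun y ↦ Real.exp (-‖y‖ ^ 2 / c) with hf
  set S := Real.sqrt (n * c / 2) with hSdef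
  have hS0 : 0 ≤ S := Real.sqrt_nonneg _
  have hS2 : S ^ 2 = n * c / 2 := Real.sq_sqrt (by positivity)
  set R := a * S with hRdef
  have hR0 : 0 ≤ R := by positivity
  set Z := ∫ y in K, f y with hZdef
  set N := ∫ y in K, f y • y with hNdef
  have hZ : 0 < Z := coneZ_pos hca0.le hca1 hu hc
  have hfpos : ∀ y, 0 < f y := fun y ↦ Real.exp_pos _
  have hfi : IntegrableOn f K := (aux_gauss_integrable hc).integrableOn
  have hnf : Integrable (fun y : EuclideanSpace ℝ (Fin n) ↦ ‖y‖ * f y) :=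
    aux_norm_gauss_integrable hc
  have hvint : Integrable (fun y : EuclideanSpace ℝ (Fin n) ↦ f y • y) := by
    apply Integrable.mono' hnf
    · exact ((Real.continuous_exp.comp
        ((continuous_norm.pow 2).neg.div_const c)).smul continuous_id).aestronglyMeasurable
    · filter_upwards with y
      rw [norm_smul, Real.norm_eq_abs, abs_of_pos (hfpos y), mul_comm]
  have hiint : Integrable (fun y : EuclideanSpace ℝ (Fin n) ↦ f y * ⟪y, u⟫) := by
    apply Integrable.mono' hnf
    · exact ((Real.continuous_exp.comp
        ((continuous_norm.pow 2).neg.div_const c)).mul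
        (continuous_id.inner continuous_const)).aestronglyMeasurable
    · filter_upwards with y
      rw [Real.norm_eq_abs, abs_mul, abs_of_pos (hfpos y), mul_comm]
      apply mul_le_mul_of_nonneg_right _ (hfpos y).le
      calc |⟪y, u⟫| ≤ ‖y‖ * ‖u‖ := abs_real_inner_le_norm y u
        _ = ‖y‖ := by rw [hu, mul_one]
  have hinner : ⟪N, u⟫ = ∫ y in K, f y * ⟪y, u⟫ := by
    rw [real_inner_comm, ← integral_inner hvint.integrableOn u]
    congr 1
    funext y
    rw [real_inner_smul_right, real_inner_comm]
  -- step: cos lower bound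
  have h4 : ca * ∫ y in K, ‖y‖ * f y ≤ ∫ y in K, f y * ⟪y, u⟫ := by
    rw [← integral_const_mul]
    apply setIntegral_mono_on ((hnf.const_mul ca).integrableOn) hiint.integrableOn
      coneSet_measurable
    intro y hy
    have : ‖y‖ * ca ≤ ⟪y, u⟫ := hy
    calc ca * (‖y‖ * f y) = f y * (‖y‖ * ca) := by ring
      _ ≤ f y * ⟪y, u⟫ := mul_le_mul_of_nonneg_left this (hfpos y).le
  -- step: radial lower bound
  set ZR := ∫ y in K ∩ Metric.closedBall 0 R, f y with hZRdef
  have hsplit : ZR + ∫ y in K \ Metric.closedBall 0 R, f y = Z :=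
    integral_inter_add_diff Metric.isClosed_closedBall.measurableSet hfi
  have h6 : R * (Z - ZR) ≤ ∫ y in K \ Metric.closedBall 0 R, ‖y‖ * f y := by
    have h6a : R * (Z - ZR) = ∫ y in K \ Metric.closedBall 0 R, R * f y := by
      rw [integral_const_mul]
      rw [show (Z - ZR : ℝ) = ∫ y in K \ Metric.closedBall 0 R, f y by linarith]
    rw [h6a]
    apply setIntegral_mono_on ((hfi.mono_set diff_subset).const_mul R)
      (hnf.integrableOn.mono_set diff_subset)
      (coneSet_measurable.diff Metric.isClosed_closedBall.measurableSet)
    intro y hy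
    have : R < ‖y‖ := by
      have := hy.2
      rw [Metric.mem_closedBall, dist_zero_right, not_le] at this
      exact this
    exact mul_le_mul_of_nonneg_right this.le (hfpos y).le
  have h7 : ∫ y in K \ Metric.closedBall 0 R, ‖y‖ * f y ≤ ∫ y in K, ‖y‖ * f y := by
    apply setIntegral_mono_set hnf.integrableOn
      (Filter.Eventually.of_forall fun y ↦ by positivity)
      (HasSubset.Subset.eventuallyLE diff_subset)
  -- step: scaling bound on ZR
  set q := a * Real.exp ((1 - a ^ 2) / 2) with hqdef
  have hq0 : 0 < q := by positivity
  have h8 : ZR ≤ q ^ n * Z := by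
    have h8a := coneZR_le (n := n) (ca := ca) (u := u) ha0 ha1.le hS0 hc
    have h8b : ∫ y in K ∩ Metric.closedBall 0 S, f y ≤ Z := by
      apply setIntegral_mono_set hfi
        (Filter.Eventually.of_forall fun y ↦ (hfpos y).le)
        (HasSubset.Subset.eventuallyLE inter_subset_left)
    have h8c : a ^ n * Real.exp ((1 - a ^ 2) * S ^ 2 / c) = q ^ n := by
      rw [hqdef, mul_pow, hS2]
      congr 1
      rw [← Real.exp_nat_mul]
      congr 1
      field_simp
    calc ZR ≤ a ^ n * Real.exp ((1 - a ^ 2) * S ^ 2 / c) *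
          ∫ y in K ∩ Metric.closedBall 0 S, f y := h8a
      _ ≤ a ^ n * Real.exp ((1 - a ^ 2) * S ^ 2 / c) * Z := by
          apply mul_le_mul_of_nonneg_left h8b (by positivity)
      _ = q ^ n * Z := by rw [h8c]
  -- assemble
  have hchain : ca * R * (1 - q ^ n) * Z ≤ ⟪N, u⟫ := by
    rw [hinner]
    calc ca * R * (1 - q ^ n) * Z = ca * (R * (Z - q ^ n * Z)) := by ring
      _ ≤ ca * (R * (Z - ZR)) := by
          apply mul_le_mul_of_nonneg_left _ hca0.le
          apply mul_le_mul_of_nonneg_left _ hR0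
          linarith
      _ ≤ ca * ∫ y in K, ‖y‖ * f y := by
          apply mul_le_mul_of_nonneg_left (h6.trans h7) hca0.le
      _ ≤ ∫ y in K, f y * ⟪y, u⟫ := h4
  have hfin : ca * R * (1 - q ^ n) ≤ ⟪Z⁻¹ • N, u⟫ := by
    rw [real_inner_smul_left]
    rw [show (ca * R * (1 - q ^ n) : ℝ) = Z⁻¹ * (ca * R * (1 - q ^ n) * Z) by
      field_simp]
    exact mul_le_mul_of_nonneg_left hchain (by positivity)
  calc ca * (a * S) * (1 - q ^ n) = ca * R * (1 - q ^ n) := by rw [hRdef]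
    _ ≤ ⟪Z⁻¹ • N, u⟫ := hfin
    _ ≤ ‖Z⁻¹ • N‖ * ‖u‖ := real_inner_le_norm _ _
    _ = ‖Z⁻¹ • N‖ := by rw [hu, mul_one]


/-- Optimality of the `√(nδ/μ)` bound: with `μ = 1/λ`, for
every `ε ∈ (0,1)` there exist `n ≥ 2` and `α ∈ (0, π/2)` such that the
conditional Gaussian mean over the circular cone
`K_α = {y : ⟪y, e₁⟫ ≥ ‖y‖ cos α}` satisfies
`‖m_δ(0)‖ ≥ (1-ε)√(nδ/μ)` for all `δ > 0`. -/
theorem stmt12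
    (lam : ℝ) (hlam : 0 < lam) (μ : ℝ) (hμ : μ = 1 / lam)
    (ε : ℝ) (hε0 : 0 < ε) (hε1 : ε < 1) :
    ∃ n : ℕ, ∃ hn : 2 ≤ n, ∃ α : ℝ, 0 < α ∧ α < Real.pi / 2 ∧
      ∀ δ : ℝ, 0 < δ →
        (1 - ε) * Real.sqrt (n * δ / μ) ≤
          ‖(∫ y in {y : EuclideanSpace ℝ (Fin n) |
                ‖y‖ * Real.cos α ≤ ⟪y, EuclideanSpace.single (⟨0, by omega⟩ : Fin n) (1 : ℝ)⟫},
              Real.exp (-‖y‖ ^ 2 / (2 * δ * lam)))⁻¹ •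
            (∫ y in {y : EuclideanSpace ℝ (Fin n) |
                ‖y‖ * Real.cos α ≤ ⟪y, EuclideanSpace.single (⟨0, by omega⟩ : Fin n) (1 : ℝ)⟫},
              Real.exp (-‖y‖ ^ 2 / (2 * δ * lam)) • y)‖ := by
  obtain ⟨a, hadef⟩ : ∃ a : ℝ, a = 1 - ε / 4 := ⟨_, rfl⟩
  have ha0 : 0 < a := by rw [hadef]; linarith
  have ha1 : a < 1 := by rw [hadef]; linarith
  obtain ⟨q, hqdef⟩ : ∃ q : ℝ, q = a * Real.exp ((1 - a ^ 2) / 2) := ⟨_, rfl⟩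
  have hq0 : 0 < q := by rw [hqdef]; positivity
  have hqlt : q < 1 := by
    have ha2 : a ^ 2 < 1 := by nlinarith
    have hne : (a ^ 2 - 1) / 2 ≠ 0 := by
      intro h
      have h2 : a ^ 2 = 1 := by linarith
      linarith
    have hexp : a < Real.exp ((a ^ 2 - 1) / 2) := by
      have h1 := Real.add_one_lt_exp hne
      nlinarith [sq_nonneg (1 - a)]
    calc q = a * Real.exp ((1 - a ^ 2) / 2) := hqdef
      _ < Real.exp ((a ^ 2 - 1) / 2) * Real.exp ((1 - a ^ 2) / 2) := by
          apply mul_lt_mul_of_pos_right hexp (Real.exp_pos _)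
      _ = 1 := by rw [← Real.exp_add]; ring_nf; exact Real.exp_zero
  obtain ⟨n₀, hn₀⟩ := exists_pow_lt_of_lt_one (show (0:ℝ) < ε / 4 by linarith) hqlt
  refine ⟨max 2 n₀, le_max_left _ _, Real.arccos a, Real.arccos_pos.mpr ha1,
    Real.arccos_lt_pi_div_two.mpr ha0, ?_⟩
  set n := max 2 n₀ with hndef
  have hqn : q ^ n ≤ ε / 4 := by
    calc q ^ n ≤ q ^ n₀ := pow_le_pow_of_le_one hq0.le hqlt.le (le_max_right _ _)
      _ ≤ ε / 4 := hn₀.le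
  have hcos : Real.cos (Real.arccos a) = a := Real.cos_arccos (by linarith) ha1.le
  intro δ hδ
  have hc : 0 < 2 * δ * lam := by positivity
  have hkey := key_bound (n := n)
    (EuclideanSpace.single (⟨0, by omega⟩ : Fin n) (1 : ℝ))
    (by rw [EuclideanSpace.norm_single, norm_one])
    ha0 ha1 ha0 ha1 hc
  rw [← hqdef] at hkey
  simp only [hcos]
  refine le_trans ?_ hkey
  have hsq : Real.sqrt ((n : ℝ) * δ / μ) = Real.sqrt ((n : ℝ) * (2 * δ * lam) / 2) := by
    congr 1
    rw [hμ]
    field_simp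
  rw [hsq]
  set X := Real.sqrt ((n : ℝ) * (2 * δ * lam) / 2) with hXdef
  have hX : 0 ≤ X := Real.sqrt_nonneg _
  have hqnn : 0 ≤ q ^ n := by positivity
  have hcoef : 1 - ε ≤ a * a * (1 - q ^ n) := by
    have h1 : 0 ≤ (1 - ε / 4) ^ 2 * (ε / 4 - q ^ n) :=
      mul_nonneg (sq_nonneg _) (by linarith)
    have h2 : 0 ≤ ε / 4 * (1 + 3 * (ε / 4) - (ε / 4) ^ 2) := by nlinarith
    rw [hadef]
    nlinarith [h1, h2]
  calc (1 - ε) * X ≤ (a * a * (1 - q ^ n)) * X := mul_le_mul_of_nonneg_right hcoef hX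
    _ = a * (a * X) * (1 - q ^ n) := by ring
end

section
/- Let n ≥ 1, R > 0, d > 0, and k ∈ {0, 1}. Then for every 0 < δ ≤ R²/(2n), ∫_{{y ∈ ℝⁿ : ‖y‖ ≥ R}} (‖y‖ + d)^k exp(−‖y‖²/(2δ)) dy ≤ (4π^{n/2}/Γ(n/2)) (R + d)^k R^{n−2} δ exp(−R²/(2δ)). -/
open MeasureTheory Real Set Filter Topology

private lemma aux_deriv (δ C : ℝ) (hδ : 0 < δ) (r : ℝ) :
    HasDerivAt (fun r : ℝ => -(2 * δ * C) * Real.exp (-r ^ 2 / (4 * δ)))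
      (C * (r * Real.exp (-r ^ 2 / (4 * δ)))) r := by
  have h1 : HasDerivAt (fun r : ℝ => -r ^ 2 / (4 * δ)) (-(2 * r) / (4 * δ)) r := by
    simpa using ((hasDerivAt_pow 2 r).neg.div_const (4 * δ))
  have h2 := (h1.exp).const_mul (-(2 * δ * C))
  convert h2 using 1
  · rfl
  · rfl
  field_simp
  ring

private lemma aux_ptwise (n : ℕ) (hn : 1 ≤ n) (R d δ : ℝ) (hR : 0 < R) (hd : 0 < d)
    (k : ℕ) (hk : k ≤ 1) (hδ0 : 0 < δ) (hδ : δ ≤ R ^ 2 / (2 * n))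
    (r : ℝ) (hr : R ≤ r) :
    r ^ (n - 1) * ((r + d) ^ k * Real.exp (-r ^ 2 / (2 * δ))) ≤
      ((R + d) ^ k * R ^ ((n : ℝ) - 2) * Real.exp (-R ^ 2 / (4 * δ))) *
        (r * Real.exp (-r ^ 2 / (4 * δ))) := by
  have hr0 : 0 < r := hR.trans_le hr
  set t := r / R with ht
  have ht1 : 1 ≤ t := (one_le_div hR).2 hr
  have ht0 : 0 ≤ t := by linarith
  have hn0 : (0:ℝ) < n := by exact_mod_cast hn
  have h2nδ : δ * (2 * n) ≤ R ^ 2 := (le_div_iff₀ (by positivity)).1 hδ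
  have hkey : (n : ℝ) * (r - R) / R ≤ (r ^ 2 - R ^ 2) / (4 * δ) := by
    rw [div_le_div_iff₀ hR (by positivity)]
    nlinarith [mul_le_mul_of_nonneg_left h2nδ (sub_nonneg.2 hr),
      mul_nonneg hR.le (sq_nonneg (r - R))]
  have hpow : t ^ n ≤ Real.exp ((r ^ 2 - R ^ 2) / (4 * δ)) := by
    have h1 : t ≤ Real.exp ((r - R) / R) := by
      have h2 := Real.add_one_le_exp ((r - R) / R)
      have h3 : (r - R) / R + 1 = t := by
        field_simp
        rw [mul_div_cancel₀ _ hR.ne']; ring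
      linarith
    calc t ^ n ≤ Real.exp ((r - R) / R) ^ n := pow_le_pow_left₀ ht0 h1 n
      _ = Real.exp ((n : ℝ) * ((r - R) / R)) := (Real.exp_nat_mul _ n).symm
      _ ≤ Real.exp ((r ^ 2 - R ^ 2) / (4 * δ)) := by
          apply Real.exp_le_exp.2
          rw [← mul_div_assoc]
          exact hkey
  have hCkey : t ^ (n - 1 + k) ≤ t * Real.exp ((r ^ 2 - R ^ 2) / (4 * δ)) := by
    calc t ^ (n - 1 + k) ≤ t ^ (n + 1) := pow_le_pow_right₀ ht1 (by omega)
      _ = t * t ^ n := by ring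
      _ ≤ t * Real.exp ((r ^ 2 - R ^ 2) / (4 * δ)) :=
          mul_le_mul_of_nonneg_left hpow ht0
  have hB : (r + d) ^ k ≤ t ^ k * (R + d) ^ k := by
    rw [← mul_pow]
    apply pow_le_pow_left₀ (by linarith)
    rw [ht, div_mul_eq_mul_div, le_div_iff₀ hR]
    nlinarith
  have hA : r ^ (n - 1) = R ^ (n - 1) * t ^ (n - 1) := by
    rw [ht, div_pow]
    field_simp
  have hF : R ^ (n - 1) * t = R ^ ((n : ℝ) - 2) * r := by
    have h1 : ((n : ℝ) - 2) = ((n - 1 : ℕ) : ℝ) - 1 := by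
      rw [Nat.cast_sub hn]; push_cast; ring
    rw [h1, Real.rpow_sub hR, Real.rpow_natCast, Real.rpow_one, ht]
    field_simp
  have hExp : Real.exp (-r ^ 2 / (2 * δ)) =
      Real.exp (-r ^ 2 / (4 * δ)) * Real.exp (-r ^ 2 / (4 * δ)) := by
    rw [← Real.exp_add]; congr 1; field_simp; ring
  have hE : Real.exp ((r ^ 2 - R ^ 2) / (4 * δ)) * Real.exp (-r ^ 2 / (4 * δ)) =
      Real.exp (-R ^ 2 / (4 * δ)) := by
    rw [← Real.exp_add]; congr 1; field_simp; ring
  calc r ^ (n - 1) * ((r + d) ^ k * Real.exp (-r ^ 2 / (2 * δ)))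
      ≤ R ^ (n - 1) * t ^ (n - 1) * ((t ^ k * (R + d) ^ k) * Real.exp (-r ^ 2 / (2 * δ))) := by
        rw [hA]
        apply mul_le_mul_of_nonneg_left _ (by positivity)
        exact mul_le_mul_of_nonneg_right hB (Real.exp_pos _).le
    _ = R ^ (n - 1) * (R + d) ^ k * (t ^ (n - 1 + k) * Real.exp (-r ^ 2 / (2 * δ))) := by
        rw [pow_add]; ring
    _ ≤ R ^ (n - 1) * (R + d) ^ k *
          ((t * Real.exp ((r ^ 2 - R ^ 2) / (4 * δ))) * Real.exp (-r ^ 2 / (2 * δ))) := by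
        apply mul_le_mul_of_nonneg_left _ (by positivity)
        exact mul_le_mul_of_nonneg_right hCkey (Real.exp_pos _).le
    _ = (R ^ (n - 1) * t) * (R + d) ^ k *
          (Real.exp ((r ^ 2 - R ^ 2) / (4 * δ)) * Real.exp (-r ^ 2 / (4 * δ))) *
          Real.exp (-r ^ 2 / (4 * δ)) := by
        rw [hExp]; ring
    _ = ((R + d) ^ k * R ^ ((n : ℝ) - 2) * Real.exp (-R ^ 2 / (4 * δ))) *
          (r * Real.exp (-r ^ 2 / (4 * δ))) := by
        rw [hE, hF]; ring


/-- Gaussian tail integral bound: for `n ≥ 1`, `R, d > 0`,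
`k ∈ {0,1}` and `0 < δ ≤ R²/(2n)`,
`∫_{‖y‖ ≥ R} (‖y‖+d)^k e^{-‖y‖²/(2δ)} dy
  ≤ (4π^{n/2}/Γ(n/2)) (R+d)^k R^{n-2} δ e^{-R²/(2δ)}`. -/
theorem stmt14
    (n : ℕ) (hn : 1 ≤ n) (R d : ℝ) (hR : 0 < R) (hd : 0 < d)
    (k : ℕ) (hk : k = 0 ∨ k = 1)
    (δ : ℝ) (hδ0 : 0 < δ) (hδ : δ ≤ R ^ 2 / (2 * n)) :
    ∫ y in {y : EuclideanSpace ℝ (Fin n) | R ≤ ‖y‖},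
        (‖y‖ + d) ^ k * Real.exp (-‖y‖ ^ 2 / (2 * δ))
      ≤ 4 * Real.pi ^ ((n : ℝ) / 2) / Real.Gamma ((n : ℝ) / 2) *
          (R + d) ^ k * R ^ ((n : ℝ) - 2) * δ * Real.exp (-R ^ 2 / (2 * δ)) := by
  have hk1 : k ≤ 1 := by rcases hk with h | h <;> omega
  haveI : Nonempty (Fin n) := Fin.pos_iff_nonempty.mp hn
  haveI : Nontrivial (EuclideanSpace ℝ (Fin n)) := by
    refine ⟨EuclideanSpace.single ⟨0, hn⟩ (1:ℝ), 0, fun h => ?_⟩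
    have := congrArg (fun v : EuclideanSpace ℝ (Fin n) => v ⟨0, hn⟩) h
    simp [EuclideanSpace.single] at this
  set f : ℝ → ℝ := fun r => (r + d) ^ k * Real.exp (-r ^ 2 / (2 * δ)) with hf
  have hSmeas : MeasurableSet {y : EuclideanSpace ℝ (Fin n) | R ≤ ‖y‖} :=
    measurableSet_le measurable_const measurable_norm
  have step1 : (∫ y in {y : EuclideanSpace ℝ (Fin n) | R ≤ ‖y‖},
        (‖y‖ + d) ^ k * Real.exp (-‖y‖ ^ 2 / (2 * δ)))
      = ∫ y : EuclideanSpace ℝ (Fin n), (Set.indicator (Ici R) f) ‖y‖ := by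
    have e0 : (Set.indicator {y : EuclideanSpace ℝ (Fin n) | R ≤ ‖y‖}
          (fun y => (‖y‖ + d) ^ k * Real.exp (-‖y‖ ^ 2 / (2 * δ))))
        = fun y => (Set.indicator (Ici R) f) ‖y‖ := by
      funext y; by_cases hy : R ≤ ‖y‖ <;> simp [Set.indicator, hy, hf]
    rw [← integral_indicator hSmeas, e0]
  rw [step1, integral_fun_norm_addHaar volume (Set.indicator (Ici R) f)]
  rw [finrank_euclideanSpace_fin, nsmul_eq_mul, smul_eq_mul]
  have step2 : (∫ y in Ioi (0:ℝ), y ^ (n - 1) • Set.indicator (Ici R) f y)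
      = ∫ y in Ioi R, y ^ (n - 1) * f y := by
    have e1 : (fun y : ℝ => y ^ (n - 1) • Set.indicator (Ici R) f y)
        = Set.indicator (Ici R) (fun y => y ^ (n - 1) * f y) := by
      funext y; by_cases hy : y ∈ Ici R <;> simp [Set.indicator, hy]
    have e2 : Ioi (0:ℝ) ∩ Ici R = Ici R :=
      Set.inter_eq_self_of_subset_right fun x hx => lt_of_lt_of_le hR hx
    rw [e1, setIntegral_indicator measurableSet_Ici, e2, integral_Ici_eq_integral_Ioi]
  rw [step2]
  -- 1D estimate
  set C := (R + d) ^ k * R ^ ((n : ℝ) - 2) * Real.exp (-R ^ 2 / (4 * δ)) with hC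
  have hC0 : 0 ≤ C := by positivity
  have hderiv : ∀ x ∈ Ici R, HasDerivAt (fun r => -(2 * δ * C) * Real.exp (-r ^ 2 / (4 * δ)))
      (C * (x * Real.exp (-x ^ 2 / (4 * δ)))) x := fun x _ => aux_deriv δ C hδ0 x
  have hnn : ∀ x ∈ Ioi R, 0 ≤ C * (x * Real.exp (-x ^ 2 / (4 * δ))) := fun x hx =>
    mul_nonneg hC0 (mul_nonneg (hR.trans hx).le (Real.exp_pos _).le)
  have htend : Tendsto (fun r : ℝ => -(2 * δ * C) * Real.exp (-r ^ 2 / (4 * δ))) atTop (𝓝 0) := by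
    have h1 : Tendsto (fun r : ℝ => -r ^ 2 / (4 * δ)) atTop atBot := by
      have h2 : Tendsto (fun r : ℝ => r ^ 2 / (4 * δ)) atTop atTop :=
        (tendsto_pow_atTop two_ne_zero).atTop_div_const (by positivity)
      have h3 : (fun r : ℝ => -r ^ 2 / (4 * δ)) = fun r : ℝ => -(r ^ 2 / (4 * δ)) := by
        funext r; ring
      rw [h3]
      exact tendsto_neg_atBot_iff.mpr h2
    have h4 := (Real.tendsto_exp_atBot.comp h1).const_mul (-(2 * δ * C))
    simpa using h4
  have hint_g : IntegrableOn (fun r => C * (r * Real.exp (-r ^ 2 / (4 * δ)))) (Ioi R) :=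
    integrableOn_Ioi_deriv_of_nonneg' hderiv hnn htend
  have hval : ∫ r in Ioi R, C * (r * Real.exp (-r ^ 2 / (4 * δ)))
      = 2 * δ * C * Real.exp (-R ^ 2 / (4 * δ)) := by
    rw [integral_Ioi_of_hasDerivAt_of_nonneg' hderiv hnn htend]
    ring
  have hbound : ∀ r ∈ Ioi R, r ^ (n - 1) * f r ≤ C * (r * Real.exp (-r ^ 2 / (4 * δ))) := by
    intro r hr
    have := aux_ptwise n hn R d δ hR hd k hk1 hδ0 hδ r (le_of_lt hr)
    simpa [hf, hC, mul_assoc] using this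
  have hcont : Continuous (fun r : ℝ => r ^ (n - 1) * f r) := by
    rw [hf]
    exact (continuous_pow _).mul (((continuous_id.add continuous_const).pow _).mul
      (((continuous_pow 2).neg.div_const _).rexp))
  have hint_h : IntegrableOn (fun r => r ^ (n - 1) * f r) (Ioi R) := by
    apply Integrable.mono hint_g hcont.aestronglyMeasurable.restrict
    filter_upwards [ae_restrict_mem measurableSet_Ioi] with r hr
    have hr0 : 0 < r := hR.trans hr
    rw [Real.norm_eq_abs, Real.norm_eq_abs, abs_of_nonneg (by positivity),
      abs_of_nonneg (hnn r hr)]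
    exact hbound r hr
  have hle : (∫ r in Ioi R, r ^ (n - 1) * f r)
      ≤ 2 * δ * C * Real.exp (-R ^ 2 / (4 * δ)) := by
    rw [← hval]
    exact setIntegral_mono_on hint_h hint_g measurableSet_Ioi hbound
  -- volume of the unit ball
  have hΓpos : 0 < Real.Gamma ((n : ℝ) / 2) :=
    Real.Gamma_pos_of_pos (by positivity)
  have hΓ : Real.Gamma ((n : ℝ) / 2 + 1) = ((n : ℝ) / 2) * Real.Gamma ((n : ℝ) / 2) :=
    Real.Gamma_add_one (by positivity)
  have hΓpos' : 0 < Real.Gamma ((n : ℝ) / 2 + 1) := by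
    rw [hΓ]; positivity
  have hV : (volume (Metric.ball (0 : EuclideanSpace ℝ (Fin n)) 1)).toReal
      = Real.pi ^ ((n : ℝ) / 2) / Real.Gamma ((n : ℝ) / 2 + 1) := by
    rw [EuclideanSpace.volume_ball]
    simp only [Fintype.card_fin, ENNReal.ofReal_one, one_pow, one_mul]
    rw [ENNReal.toReal_ofReal (by positivity)]
    congr 1
    rw [← Real.rpow_natCast (Real.sqrt Real.pi) n, Real.sqrt_eq_rpow,
      ← Real.rpow_mul Real.pi_pos.le]
    congr 1
    ring
  rw [measureReal_def, hV]
  have hrhs : (n : ℝ) * (Real.pi ^ ((n : ℝ) / 2) / Real.Gamma ((n : ℝ) / 2 + 1)) *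
        (2 * δ * C * Real.exp (-R ^ 2 / (4 * δ)))
      = 4 * Real.pi ^ ((n : ℝ) / 2) / Real.Gamma ((n : ℝ) / 2) *
          (R + d) ^ k * R ^ ((n : ℝ) - 2) * δ * Real.exp (-R ^ 2 / (2 * δ)) := by
    have hexp2 : Real.exp (-R ^ 2 / (4 * δ)) * Real.exp (-R ^ 2 / (4 * δ))
        = Real.exp (-R ^ 2 / (2 * δ)) := by
      rw [← Real.exp_add]; congr 1; field_simp; ring
    have hn0 : (0:ℝ) < n := by exact_mod_cast hn
    rw [hΓ, hC, ← hexp2]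
    field_simp
    ring
  calc (n : ℝ) * (Real.pi ^ ((n : ℝ) / 2) / Real.Gamma ((n : ℝ) / 2 + 1) *
        ∫ r in Ioi R, r ^ (n - 1) * f r)
      ≤ (n : ℝ) * (Real.pi ^ ((n : ℝ) / 2) / Real.Gamma ((n : ℝ) / 2 + 1) *
        (2 * δ * C * Real.exp (-R ^ 2 / (4 * δ)))) := by
        apply mul_le_mul_of_nonneg_left _ (Nat.cast_nonneg n)
        apply mul_le_mul_of_nonneg_left hle
        positivity
    _ = _ := by linear_combination hrhs
end

section
/- Let n ≥ 2, ρ > 0, d > 0, M ≥ 0, and δ > 0. Let h : B_ρ^{n−1} → ℝ satisfy h(z) ≤ 0 for all z and admit the decomposition h(z) = (1/2)⟨Hz, z⟩ + r(z) for a symmetric (n−1)×(n−1) matrix H with |r(z)| ≤ (M/6)‖z‖³ on B_ρ^{n−1}. Define J(z) := ∫_{−ρ}^{h(z)} e^{−(t−d)²/(2δ)} dt. Then the tangential moment satisfies ‖∫_{B_ρ^{n−1}} z e^{−‖z‖²/(2δ)} J(z) dz‖ ≤ (M(n² − 1)/6) (2πδ)^{(n−1)/2} δ² e^{−d²/(2δ)}.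 -/
open MeasureTheory Real
open scoped RealInnerProductSpace

lemma integrable_pow_mul_exp_neg_mul_sq {b : ℝ} (hb : 0 < b) (k : ℕ) :
    Integrable fun x : ℝ => x ^ k * Real.exp (-b * x ^ 2) := by
  have : (-1 : ℝ) < (k : ℝ) := by exact_mod_cast neg_one_lt_zero.trans_le (Nat.cast_nonneg k)
  simpa [Real.rpow_natCast] using integrable_rpow_mul_exp_neg_mul_sq hb this

lemma gauss_moment_step {b : ℝ} (hb : 0 < b) (m : ℕ) :
    ∫ x : ℝ, x ^ (m + 2) * Real.exp (-b * x ^ 2)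
      = (m + 1) / (2 * b) * ∫ x : ℝ, x ^ m * Real.exp (-b * x ^ 2) := by
  have hderiv : ∀ x : ℝ, HasDerivAt (fun x : ℝ => x ^ (m + 1) * Real.exp (-b * x ^ 2))
      ((m + 1) * x ^ m * Real.exp (-b * x ^ 2) - 2 * b * (x ^ (m + 2) * Real.exp (-b * x ^ 2))) x := by
    intro x
    have h1 : HasDerivAt (fun x : ℝ => x ^ (m + 1)) ((m + 1) * x ^ m) x := by
      simpa using hasDerivAt_pow (m + 1) x
    have h2 : HasDerivAt (fun x : ℝ => Real.exp (-b * x ^ 2)) (Real.exp (-b * x ^ 2) * (-b * (2 * x))) x := by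
      have := ((hasDerivAt_pow 2 x).const_mul (-b)).exp
      simpa using this
    have : HasDerivAt (fun x : ℝ => x ^ (m + 1) * Real.exp (-b * x ^ 2)) _ x := h1.mul h2
    convert this using 1
    ring
  have hint : ∀ k : ℕ, Integrable fun x : ℝ => x ^ k * Real.exp (-b * x ^ 2) :=
    integrable_pow_mul_exp_neg_mul_sq hb
  have hf' : Integrable (fun x : ℝ => (m + 1) * x ^ m * Real.exp (-b * x ^ 2)
      - 2 * b * (x ^ (m + 2) * Real.exp (-b * x ^ 2))) := by
    have := (((hint m).const_mul ((m : ℝ) + 1)).sub ((hint (m + 2)).const_mul (2 * b)))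
    simpa [mul_assoc, Pi.sub_def] using this
  have hzero := integral_eq_zero_of_hasDerivAt_of_integrable hderiv hf' (hint (m + 1))
  rw [integral_sub (by simpa [mul_assoc] using (hint m).const_mul ((m : ℝ) + 1))
    ((hint (m + 2)).const_mul (2 * b)), sub_eq_zero, integral_const_mul] at hzero
  have h1 : ∫ x : ℝ, ((m : ℝ) + 1) * x ^ m * Real.exp (-b * x ^ 2)
      = ((m : ℝ) + 1) * ∫ x : ℝ, x ^ m * Real.exp (-b * x ^ 2) := by
    simp_rw [mul_assoc]; exact integral_const_mul _ _
  rw [h1] at hzero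
  have h2b : (2 * b) ≠ 0 := by positivity
  rw [div_mul_eq_mul_div, eq_div_iff h2b]
  linarith [hzero]

lemma gauss_moment_two {b : ℝ} (hb : 0 < b) :
    ∫ x : ℝ, x ^ 2 * Real.exp (-b * x ^ 2) = 1 / (2 * b) * Real.sqrt (π / b) := by
  have h := gauss_moment_step hb 0
  rw [show (0 + 2) = 2 from rfl] at h
  simp only [pow_zero, one_mul] at h
  rw [h, integral_gaussian]; norm_num

lemma gauss_moment_four {b : ℝ} (hb : 0 < b) :
    ∫ x : ℝ, x ^ 4 * Real.exp (-b * x ^ 2) = 3 / (4 * b ^ 2) * Real.sqrt (π / b) := by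
  have h := gauss_moment_step hb 2
  rw [gauss_moment_two hb] at h
  rw [show (2 + 2) = 4 from rfl] at h
  rw [h]; field_simp; ring

lemma gauss_integrand_expand {m : ℕ} {b : ℝ} (x : Fin m → ℝ) :
    (∑ i, x i ^ 2) ^ 2 * Real.exp (-b * ∑ i, x i ^ 2)
      = ∑ i, ∑ j, ∏ k, (x k ^ ((if k = i then 2 else 0) + (if k = j then 2 else 0))
          * Real.exp (-b * x k ^ 2)) := by
  have hexp : Real.exp (-b * ∑ i, x i ^ 2) = ∏ k, Real.exp (-b * x k ^ 2) := by
    rw [Finset.mul_sum, Real.exp_sum]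
  have hterm : ∀ i j : Fin m,
      (∏ k, (x k ^ ((if k = i then 2 else 0) + (if k = j then 2 else 0))
        * Real.exp (-b * x k ^ 2)))
      = x i ^ 2 * x j ^ 2 * ∏ k, Real.exp (-b * x k ^ 2) := by
    intro i j
    rw [Finset.prod_mul_distrib]
    congr 1
    simp_rw [pow_add]
    rw [Finset.prod_mul_distrib]
    congr 1
    · rw [Finset.prod_eq_single i (fun k _ hk => by simp [hk])
        (fun h => absurd (Finset.mem_univ i) h)]
      simp
    · rw [Finset.prod_eq_single j (fun k _ hk => by simp [hk])
        (fun h => absurd (Finset.mem_univ j) h)]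
      simp
  simp_rw [hterm]
  rw [hexp, sq (∑ i, x i ^ 2), Finset.sum_mul_sum]
  rw [Finset.sum_mul]
  congr 1; ext i
  rw [Finset.sum_mul]

lemma gauss_moment4_pi (m : ℕ) {b : ℝ} (hb : 0 < b) :
    ∫ x : Fin m → ℝ, (∑ i, x i ^ 2) ^ 2 * Real.exp (-b * ∑ i, x i ^ 2)
      = m * (m + 2) * (1 / (2 * b)) ^ 2 * Real.sqrt (π / b) ^ m := by
  set s := Real.sqrt (π / b) with hs
  set c := 1 / (2 * b) with hc
  have hI : ∀ a : ℕ, ∫ t : ℝ, t ^ a * Real.exp (-b * t ^ 2)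
      = (if a = 0 then 1 else if a = 2 then c else 3 * c ^ 2) * s → True := fun _ _ => trivial
  -- value of ∫ g a for a ∈ {0,2,4}
  have I0 : ∫ t : ℝ, t ^ (0:ℕ) * Real.exp (-b * t ^ 2) = s := by
    simp only [pow_zero, one_mul]
    exact integral_gaussian b
  have I2 : ∫ t : ℝ, t ^ (2:ℕ) * Real.exp (-b * t ^ 2) = c * s := gauss_moment_two hb
  have I4 : ∫ t : ℝ, t ^ (4:ℕ) * Real.exp (-b * t ^ 2) = 3 * c ^ 2 * s := by
    rw [gauss_moment_four hb, hc]; ring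
  have hint : ∀ a : ℕ, Integrable fun t : ℝ => t ^ a * Real.exp (-b * t ^ 2) :=
    integrable_pow_mul_exp_neg_mul_sq hb
  simp_rw [gauss_integrand_expand]
  have hintprod : ∀ i j : Fin m, Integrable (fun x : Fin m → ℝ =>
      ∏ k, (x k ^ ((if k = i then 2 else 0) + (if k = j then 2 else 0))
        * Real.exp (-b * x k ^ 2))) := by
    intro i j
    exact Integrable.fintype_prod_dep (fun k => hint _)
  rw [integral_finset_sum _ (fun i _ => integrable_finset_sum _ (fun j _ => hintprod i j))]
  have : ∀ i : Fin m, ∫ x : Fin m → ℝ, ∑ j, ∏ k,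
      (x k ^ ((if k = i then 2 else 0) + (if k = j then 2 else 0)) * Real.exp (-b * x k ^ 2))
      = ∑ j, ∫ x : Fin m → ℝ, ∏ k,
      (x k ^ ((if k = i then 2 else 0) + (if k = j then 2 else 0)) * Real.exp (-b * x k ^ 2)) :=
    fun i => integral_finset_sum _ (fun j _ => hintprod i j)
  simp_rw [this]
  have hP : ∀ i j : Fin m, ∫ x : Fin m → ℝ, ∏ k,
      (x k ^ ((if k = i then 2 else 0) + (if k = j then 2 else 0)) * Real.exp (-b * x k ^ 2))
      = ∏ k, ∫ t : ℝ, t ^ ((if k = i then 2 else 0) + (if k = j then 2 else 0))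
          * Real.exp (-b * t ^ 2) := by
    intro i j
    exact integral_fintype_prod_eq_prod
      (fun k t => t ^ ((if k = i then 2 else 0) + (if k = j then 2 else 0)) * Real.exp (-b * t ^ 2))
  simp_rw [hP]
  -- compute the products
  have hdiag : ∀ i : Fin m, (∏ k, ∫ t : ℝ, t ^ ((if k = i then 2 else 0) + (if k = i then 2 else 0))
      * Real.exp (-b * t ^ 2)) = 3 * c ^ 2 * s ^ m := by
    intro i
    have hm : 1 ≤ m := i.pos
    have hcong : ∀ k ∈ Finset.univ.erase i, (∫ t : ℝ, t ^ ((if k = i then 2 else 0)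
        + (if k = i then 2 else 0)) * Real.exp (-b * t ^ 2)) = s := by
      intro k hk
      rw [if_neg (Finset.ne_of_mem_erase hk)]
      simpa using I0
    rw [← Finset.mul_prod_erase Finset.univ _ (Finset.mem_univ i),
      Finset.prod_congr rfl hcong, Finset.prod_const,
      Finset.card_erase_of_mem (Finset.mem_univ i)]
    simp only [Finset.card_univ, Fintype.card_fin]
    have hhead : (∫ t : ℝ, t ^ ((if i = i then 2 else 0) + if i = i then 2 else 0)
        * Real.exp (-b * t ^ 2)) = 3 * c ^ 2 * s := by simpa using I4
    rw [show s ^ m = s ^ (1 + (m - 1)) by rw [Nat.add_sub_cancel' hm], pow_add, pow_one]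
    simp only [reduceIte]
    rw [show ((2:ℕ) + 2) = 4 from rfl, I4]
    ring
  have hoff : ∀ i j : Fin m, i ≠ j → (∏ k, ∫ t : ℝ,
      t ^ ((if k = i then 2 else 0) + (if k = j then 2 else 0)) * Real.exp (-b * t ^ 2))
      = c ^ 2 * s ^ m := by
    intro i j hij
    have hm : 2 ≤ m := by
      have := Fintype.one_lt_card_iff_nontrivial.mpr ⟨⟨i, j, hij⟩⟩
      simp at this; omega
    have h1 : ∀ k ∈ (Finset.univ.erase i).erase j, (∫ t : ℝ,
        t ^ ((if k = i then 2 else 0) + (if k = j then 2 else 0)) * Real.exp (-b * t ^ 2)) = s := by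
      intro k hk
      rw [if_neg (Finset.ne_of_mem_erase (Finset.mem_of_mem_erase hk)),
        if_neg (Finset.ne_of_mem_erase hk)]
      simpa using I0
    have hh1 : (∫ t : ℝ, t ^ ((if i = i then 2 else 0) + if i = j then 2 else 0)
        * Real.exp (-b * t ^ 2)) = c * s := by simpa [hij] using I2
    have hh2 : (∫ t : ℝ, t ^ ((if j = i then 2 else 0) + if j = j then 2 else 0)
        * Real.exp (-b * t ^ 2)) = c * s := by simpa [Ne.symm hij] using I2
    rw [← Finset.mul_prod_erase Finset.univ _ (Finset.mem_univ i),
      ← Finset.mul_prod_erase _ _ (Finset.mem_erase.mpr ⟨(Ne.symm hij), Finset.mem_univ j⟩),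
      Finset.prod_congr rfl h1, Finset.prod_const,
      Finset.card_erase_of_mem (Finset.mem_erase.mpr ⟨(Ne.symm hij), Finset.mem_univ j⟩),
      Finset.card_erase_of_mem (Finset.mem_univ i)]
    simp only [Finset.card_univ, Fintype.card_fin, reduceIte, if_neg hij, if_neg (Ne.symm hij)]
    rw [I2,
      show s ^ m = s ^ (2 + (m - 1 - 1)) by congr 1; omega, pow_add]
    ring
  -- sum it all
  have hsum : ∀ i : Fin m, ∑ j, (∏ k, ∫ t : ℝ,
      t ^ ((if k = i then 2 else 0) + (if k = j then 2 else 0)) * Real.exp (-b * t ^ 2))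
      = (m + 2) * c ^ 2 * s ^ m := by
    intro i
    rw [← Finset.add_sum_erase Finset.univ _ (Finset.mem_univ i), hdiag i,
      Finset.sum_congr rfl (fun j hj => hoff i j (Ne.symm (Finset.ne_of_mem_erase hj))),
      Finset.sum_const, Finset.card_erase_of_mem (Finset.mem_univ i)]
    simp only [Finset.card_univ, Fintype.card_fin, nsmul_eq_mul]
    have hm : 1 ≤ m := i.pos
    have : ((m : ℝ) - 1) = ((m - 1 : ℕ) : ℝ) := by
      rw [Nat.cast_sub hm]; norm_num
    rw [← this]
    ring
  rw [Finset.sum_congr rfl (fun i _ => hsum i), Finset.sum_const]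
  simp only [Finset.card_univ, Fintype.card_fin, nsmul_eq_mul]
  ring

lemma euclid_moment4 (m : ℕ) {b : ℝ} (hb : 0 < b) :
    Integrable (fun z : EuclideanSpace ℝ (Fin m) => ‖z‖ ^ 4 * Real.exp (-b * ‖z‖ ^ 2)) ∧
    ∫ z : EuclideanSpace ℝ (Fin m), ‖z‖ ^ 4 * Real.exp (-b * ‖z‖ ^ 2)
      = m * (m + 2) * (1 / (2 * b)) ^ 2 * Real.sqrt (π / b) ^ m := by
  have hnorm : ∀ z : EuclideanSpace ℝ (Fin m), ‖z‖ ^ 2 = ∑ i, z i ^ 2 := by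
    intro z
    rw [EuclideanSpace.norm_eq, Real.sq_sqrt (by positivity)]
    simp [sq_abs]
  have hfun : (fun z : EuclideanSpace ℝ (Fin m) => ‖z‖ ^ 4 * Real.exp (-b * ‖z‖ ^ 2))
      = fun z => (∑ i, z i ^ 2) ^ 2 * Real.exp (-b * ∑ i, z i ^ 2) := by
    funext z; rw [show (4:ℕ) = 2 * 2 from rfl, pow_mul, hnorm z]
  rw [hfun]
  have hmp := (EuclideanSpace.volume_preserving_symm_measurableEquiv_toLp (Fin m)).symm
  have hemb := ((MeasurableEquiv.toLp 2 (Fin m → ℝ)).symm).symm.measurableEmbedding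
  have hcomp : ((fun z : EuclideanSpace ℝ (Fin m) =>
        (∑ i, z i ^ 2) ^ 2 * Real.exp (-b * ∑ i, z i ^ 2))
      ∘ ((MeasurableEquiv.toLp 2 (Fin m → ℝ)).symm).symm)
      = fun x : Fin m → ℝ => (∑ i, x i ^ 2) ^ 2 * Real.exp (-b * ∑ i, x i ^ 2) := by
    funext x
    simp only [Function.comp_apply]
    congr 1
  have hintpi : Integrable
      (fun x : Fin m → ℝ => (∑ i, x i ^ 2) ^ 2 * Real.exp (-b * ∑ i, x i ^ 2)) := by
    have he : (fun x : Fin m → ℝ => (∑ i, x i ^ 2) ^ 2 * Real.exp (-b * ∑ i, x i ^ 2))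
        = fun x => ∑ i, ∑ j, ∏ k, (x k ^ ((if k = i then 2 else 0) + (if k = j then 2 else 0))
            * Real.exp (-b * x k ^ 2)) := by
      funext x; exact gauss_integrand_expand x
    rw [he]
    exact integrable_finset_sum _ (fun i _ => integrable_finset_sum _ (fun j _ =>
      Integrable.fintype_prod_dep (fun k => integrable_pow_mul_exp_neg_mul_sq hb _)))
  constructor
  · rw [← hmp.integrable_comp_emb hemb, hcomp]
    exact hintpi
  · rw [← hmp.integral_comp hemb]
    simp only [Function.comp_apply, show ∀ (x : Fin m → ℝ) (i : Fin m),
      ((MeasurableEquiv.toLp 2 (Fin m → ℝ)).symm).symm x i = x i from fun _ _ => rfl]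
    exact gauss_moment4_pi m hb

/-- Bound on the tangential moment: if `h ≤ 0` on
`B_ρ^{n-1}` and `h(z) = ½⟪Hz, z⟫ + r(z)` with `H` symmetric and
`|r(z)| ≤ (M/6)‖z‖³`, then with `J(z) = ∫_{-ρ}^{h(z)} e^{-(t-d)²/(2δ)} dt`,
`‖∫_{B_ρ^{n-1}} z e^{-‖z‖²/(2δ)} J(z) dz‖
  ≤ (M(n²-1)/6)(2πδ)^{(n-1)/2} δ² e^{-d²/(2δ)}`. -/
theorem stmt18
    (n : ℕ) (hn : 2 ≤ n) (ρ d M δ : ℝ) (hρ : 0 < ρ) (hd : 0 < d)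
    (hM : 0 ≤ M) (hδ : 0 < δ)
    (h : EuclideanSpace ℝ (Fin (n - 1)) → ℝ)
    (hneg : ∀ z ∈ Metric.ball (0 : EuclideanSpace ℝ (Fin (n - 1))) ρ, h z ≤ 0)
    (H : EuclideanSpace ℝ (Fin (n - 1)) →L[ℝ] EuclideanSpace ℝ (Fin (n - 1)))
    (hHsymm : ∀ z w : EuclideanSpace ℝ (Fin (n - 1)), ⟪H z, w⟫ = ⟪z, H w⟫)
    (r : EuclideanSpace ℝ (Fin (n - 1)) → ℝ)
    (hdecomp : ∀ z ∈ Metric.ball (0 : EuclideanSpace ℝ (Fin (n - 1))) ρ,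
      h z = 1 / 2 * ⟪H z, z⟫ + r z)
    (hr : ∀ z ∈ Metric.ball (0 : EuclideanSpace ℝ (Fin (n - 1))) ρ,
      |r z| ≤ M / 6 * ‖z‖ ^ 3)
    (J : EuclideanSpace ℝ (Fin (n - 1)) → ℝ)
    (hJ : ∀ z, J z = ∫ t in (-ρ)..(h z), Real.exp (-(t - d) ^ 2 / (2 * δ))) :
    ‖∫ z in Metric.ball (0 : EuclideanSpace ℝ (Fin (n - 1))) ρ,
        (Real.exp (-‖z‖ ^ 2 / (2 * δ)) * J z) • z‖
      ≤ M * ((n : ℝ) ^ 2 - 1) / 6 * (2 * Real.pi * δ) ^ (((n : ℝ) - 1) / 2) *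
          δ ^ 2 * Real.exp (-d ^ 2 / (2 * δ)) := by
  set B := Metric.ball (0 : EuclideanSpace ℝ (Fin (n - 1))) ρ with hB
  set f : EuclideanSpace ℝ (Fin (n - 1)) → ℝ :=
    fun z => Real.exp (-‖z‖ ^ 2 / (2 * δ)) * J z with hf
  set C := Real.exp (-d ^ 2 / (2 * δ)) with hC
  have h1n : (1 : ℝ) ≤ (n : ℝ) := by
    have : (2 : ℝ) ≤ (n : ℝ) := by exact_mod_cast hn
    linarith
  have hn2 : (0 : ℝ) ≤ (n : ℝ) ^ 2 - 1 := by nlinarith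
  have hRHS : 0 ≤ M * ((n : ℝ) ^ 2 - 1) / 6 * (2 * Real.pi * δ) ^ (((n : ℝ) - 1) / 2) *
      δ ^ 2 * C := by
    have hbase : (0 : ℝ) ≤ (2 * Real.pi * δ) ^ (((n : ℝ) - 1) / 2) :=
      Real.rpow_nonneg (by positivity) _
    have hCpos : 0 < C := Real.exp_pos _
    positivity
  by_cases hInt : IntegrableOn (fun z => f z • z) B volume
  swap
  · rw [integral_undef hInt]
    simpa using hRHS
  -- moment lemma
  have hb : (0 : ℝ) < 1 / (2 * δ) := by positivity
  obtain ⟨hmomInt, hmomVal⟩ := euclid_moment4 (n - 1) hb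
  have hfeq : (fun z : EuclideanSpace ℝ (Fin (n - 1)) =>
        ‖z‖ ^ 4 * Real.exp (-(1 / (2 * δ)) * ‖z‖ ^ 2))
      = fun z : EuclideanSpace ℝ (Fin (n - 1)) => ‖z‖ ^ 4 * Real.exp (-‖z‖ ^ 2 / (2 * δ)) := by
    funext z
    rw [show -(1 / (2 * δ)) * ‖z‖ ^ 2 = -‖z‖ ^ 2 / (2 * δ) by ring]
  rw [hfeq] at hmomInt hmomVal
  -- negation machinery
  have hmpneg : MeasurePreserving (fun z : EuclideanSpace ℝ (Fin (n - 1)) => -z)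
      volume volume := Measure.measurePreserving_neg volume
  have hembneg : MeasurableEmbedding (fun z : EuclideanSpace ℝ (Fin (n - 1)) => -z) :=
    (MeasurableEquiv.neg (EuclideanSpace ℝ (Fin (n - 1)))).measurableEmbedding
  have hpre : (fun z : EuclideanSpace ℝ (Fin (n - 1)) => -z) ⁻¹' B = B := by
    ext z
    simp [hB, mem_ball_zero_iff]
  have hcompeq : ((fun w : EuclideanSpace ℝ (Fin (n - 1)) => f w • w)
      ∘ (fun z : EuclideanSpace ℝ (Fin (n - 1)) => -z))
      = fun z : EuclideanSpace ℝ (Fin (n - 1)) => -(f (-z) • z) := by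
    funext z; simp [Function.comp]
  have intneg : IntegrableOn (fun z : EuclideanSpace ℝ (Fin (n - 1)) => f (-z) • z)
      B volume := by
    have h0 : IntegrableOn ((fun w : EuclideanSpace ℝ (Fin (n - 1)) => f w • w)
        ∘ (fun z : EuclideanSpace ℝ (Fin (n - 1)) => -z)) B volume := by
      rw [show B = (fun z : EuclideanSpace ℝ (Fin (n - 1)) => -z) ⁻¹' B from hpre.symm]
      exact (hmpneg.integrableOn_comp_preimage hembneg).mpr (hpre ▸ hInt)
    rw [hcompeq] at h0
    have h1 : IntegrableOn (fun z : EuclideanSpace ℝ (Fin (n - 1)) =>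
        -(-(f (-z) • z))) B volume := h0.neg
    simpa only [neg_neg] using h1
  have heq : ∫ z in B, f (-z) • z = -∫ z in B, f z • z := by
    have h1 : ∫ z in B, f (-z) • (-z) = ∫ z in B, f z • z := by
      have h2 := hmpneg.setIntegral_preimage_emb hembneg
        (fun w : EuclideanSpace ℝ (Fin (n - 1)) => f w • w) B
      rwa [hpre] at h2
    rw [show (fun z : EuclideanSpace ℝ (Fin (n - 1)) => f (-z) • (-z))
        = fun z : EuclideanSpace ℝ (Fin (n - 1)) => -(f (-z) • z)
      from funext fun z => by simp, integral_neg] at h1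
    rw [← h1, neg_neg]
  -- halving identity
  have hdiffint : IntegrableOn
      (fun z : EuclideanSpace ℝ (Fin (n - 1)) => (f z - f (-z)) • z) B volume := by
    have := hInt.sub intneg
    simpa [sub_smul, Pi.sub_def] using this
  have hhalf : (∫ z in B, f z • z)
      = (2 : ℝ)⁻¹ • ∫ z in B, (f z - f (-z)) • z := by
    have h2 : ∫ z in B, (f z - f (-z)) • z
        = (∫ z in B, f z • z) - ∫ z in B, f (-z) • z := by
      rw [show (fun z : EuclideanSpace ℝ (Fin (n - 1)) => (f z - f (-z)) • z)
        = fun z : EuclideanSpace ℝ (Fin (n - 1)) => f z • z - f (-z) • z by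
          funext z; rw [sub_smul]]
      exact integral_sub hInt intneg
    rw [h2, heq, sub_neg_eq_add, ← two_smul ℝ, smul_smul]
    norm_num
  -- pointwise bound
  have key : ∀ z ∈ B, ‖(f z - f (-z)) • z‖
      ≤ M / 3 * C * (‖z‖ ^ 4 * Real.exp (-‖z‖ ^ 2 / (2 * δ))) := by
    intro z hz
    have hz' : -z ∈ B := by
      rw [hB, mem_ball_zero_iff] at hz ⊢
      simpa using hz
    have hg : ∀ a b : ℝ, IntervalIntegrable
        (fun t => Real.exp (-(t - d) ^ 2 / (2 * δ))) volume a b := by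
      intro a b
      apply Continuous.intervalIntegrable
      fun_prop
    have hJd : J z - J (-z) = ∫ t in (h (-z))..(h z), Real.exp (-(t - d) ^ 2 / (2 * δ)) := by
      rw [hJ z, hJ (-z)]
      exact intervalIntegral.integral_interval_sub_left (hg _ _) (hg _ _)
    have hhb : |h z - h (-z)| ≤ M / 3 * ‖z‖ ^ 3 := by
      have e1 := hdecomp z hz
      have e2 := hdecomp (-z) hz'
      have e3 : ⟪H (-z), (-z : EuclideanSpace ℝ (Fin (n - 1)))⟫ = ⟪H z, z⟫ := by
        rw [map_neg, inner_neg_neg]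
      rw [e1, e2, e3, show (1 / 2 * ⟪H z, z⟫ + r z) - (1 / 2 * ⟪H z, z⟫ + r (-z))
        = r z - r (-z) by ring]
      calc |r z - r (-z)| ≤ |r z| + |r (-z)| := abs_sub _ _
        _ ≤ M / 6 * ‖z‖ ^ 3 + M / 6 * ‖(-z : EuclideanSpace ℝ (Fin (n - 1)))‖ ^ 3 :=
            add_le_add (hr z hz) (hr _ hz')
        _ = M / 3 * ‖z‖ ^ 3 := by rw [norm_neg]; ring
    have hJb : |J z - J (-z)| ≤ C * (M / 3 * ‖z‖ ^ 3) := by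
      rw [hJd]
      have hbound : ∀ t ∈ Set.uIoc (h (-z)) (h z),
          ‖Real.exp (-(t - d) ^ 2 / (2 * δ))‖ ≤ C := by
        intro t ht
        have ht0 : t ≤ 0 := ht.2.trans (sup_le (hneg _ hz') (hneg _ hz))
        have hsq : d ^ 2 ≤ (t - d) ^ 2 := by nlinarith
        rw [Real.norm_eq_abs, abs_of_pos (Real.exp_pos _), hC]
        apply Real.exp_le_exp.mpr
        calc -(t - d) ^ 2 / (2 * δ) = -(t - d) ^ 2 * (2 * δ)⁻¹ := by ring
          _ ≤ -d ^ 2 * (2 * δ)⁻¹ :=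
              mul_le_mul_of_nonneg_right (by linarith) (by positivity)
          _ = -d ^ 2 / (2 * δ) := by ring
      have hle := intervalIntegral.norm_integral_le_of_norm_le_const hbound
      rw [Real.norm_eq_abs] at hle
      calc |∫ t in (h (-z))..(h z), Real.exp (-(t - d) ^ 2 / (2 * δ))|
          ≤ C * |h z - h (-z)| := hle
        _ ≤ C * (M / 3 * ‖z‖ ^ 3) :=
            mul_le_mul_of_nonneg_left hhb (Real.exp_pos _).le
    rw [norm_smul, Real.norm_eq_abs]
    have hfz : f z - f (-z) = Real.exp (-‖z‖ ^ 2 / (2 * δ)) * (J z - J (-z)) := by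
      simp only [hf, norm_neg]
      ring
    rw [hfz, abs_mul, abs_of_pos (Real.exp_pos _)]
    calc Real.exp (-‖z‖ ^ 2 / (2 * δ)) * |J z - J (-z)| * ‖z‖
        ≤ Real.exp (-‖z‖ ^ 2 / (2 * δ)) * (C * (M / 3 * ‖z‖ ^ 3)) * ‖z‖ :=
          mul_le_mul_of_nonneg_right
            (mul_le_mul_of_nonneg_left hJb (Real.exp_pos _).le) (norm_nonneg _)
      _ = M / 3 * C * (‖z‖ ^ 4 * Real.exp (-‖z‖ ^ 2 / (2 * δ))) := by ring
  -- final chain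
  have hM3C : (0 : ℝ) ≤ M / 3 * C := by positivity
  have hchain : ‖∫ z in B, f z • z‖
      ≤ 2⁻¹ * (M / 3 * C * ∫ z : EuclideanSpace ℝ (Fin (n - 1)),
          ‖z‖ ^ 4 * Real.exp (-‖z‖ ^ 2 / (2 * δ))) := by
    calc ‖∫ z in B, f z • z‖
        = (2 : ℝ)⁻¹ * ‖∫ z in B, (f z - f (-z)) • z‖ := by
          rw [hhalf, norm_smul]
          norm_num
      _ ≤ 2⁻¹ * ∫ z in B, ‖(f z - f (-z)) • z‖ :=
          mul_le_mul_of_nonneg_left (norm_integral_le_integral_norm _) (by norm_num)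
      _ ≤ 2⁻¹ * ∫ z in B, M / 3 * C * (‖z‖ ^ 4 * Real.exp (-‖z‖ ^ 2 / (2 * δ))) := by
          refine mul_le_mul_of_nonneg_left ?_ (by norm_num)
          exact setIntegral_mono_on hdiffint.norm
            ((hmomInt.const_mul (M / 3 * C)).integrableOn) measurableSet_ball key
      _ = 2⁻¹ * (M / 3 * C * ∫ z in B, ‖z‖ ^ 4 * Real.exp (-‖z‖ ^ 2 / (2 * δ))) := by
          rw [integral_const_mul]
      _ ≤ 2⁻¹ * (M / 3 * C * ∫ z : EuclideanSpace ℝ (Fin (n - 1)),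
            ‖z‖ ^ 4 * Real.exp (-‖z‖ ^ 2 / (2 * δ))) := by
          refine mul_le_mul_of_nonneg_left (mul_le_mul_of_nonneg_left ?_ hM3C) (by norm_num)
          exact setIntegral_le_integral hmomInt
            (Filter.Eventually.of_forall fun z => by positivity)
  refine hchain.trans (le_of_eq ?_)
  rw [hmomVal]
  have hc2 : π / (1 / (2 * δ)) = 2 * π * δ := by
    field_simp
  have hc3 : Real.sqrt (2 * π * δ) ^ (n - 1) = (2 * π * δ) ^ (((n : ℝ) - 1) / 2) := by
    rw [Real.sqrt_eq_rpow, ← Real.rpow_natCast ((2 * π * δ) ^ ((1 : ℝ) / 2)) (n - 1),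
      ← Real.rpow_mul (by positivity)]
    congr 1
    rw [Nat.cast_sub (by omega : 1 ≤ n), Nat.cast_one]
    ring
  have hc1 : (1 / (2 * (1 / (2 * δ)))) = δ := by
    field_simp
  have hcast : ((n - 1 : ℕ) : ℝ) = (n : ℝ) - 1 := by
    rw [Nat.cast_sub (by omega : 1 ≤ n), Nat.cast_one]
  rw [hc2, hc3, hc1, hcast]
  ring
end
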